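/- arXiv:2502.08228 — 9 statements merged into one kernel-verified Lean document; each statement's English description precedes it below -/
import Mathlib

section
/- Let D be a nonempty finite index set with reference prices r_d ≥ 0, passenger numbers t_d ∈ ℕ≥1 and distances l_d ≥ 0 for d ∈ D. Then there exists an optimal solution (p*, f*) with p* ≥ 0, f* ≥ 0 minimizing ∑_{d∈D} t_d · |r_d − (p·l_d + f)| over all p ≥ 0, f ≥ 0 such that at least one of the following holds: (i) there are two distinct OD pairs d₁, d₂ ∈ D with l_{d₁} ≠ l_{d₂} whose reference prices are met exactly, i.e., r_{d₁} = p*·l_{d₁} + f* and r_{d₂} = p*·l_{d₂} + f*; (ii) there is some d ∈ D with r_d = p*·l_d + f* and additionally p* = 0 or f* = 0; (iii) p* = 0 and f* = 0. -/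
/-!
On the quadrant the objective `F` satisfies `p * l d + f ≤ F (p, f) + F (0, 0)`, so it attains
its minimum (on the ray `p = 0` when all distances vanish).
The set of minimizers is closed and lies in the quadrant, hence has an extreme point `x`.
Near `x` the objective is affine along every direction that keeps the exactly met prices
exact, so at an extreme minimizer each such direction must leave the quadrant on one side.
If no price is met exactly, scaling `x` is such a direction and forces `x = 0`. If all exactly
met prices share one distance `L` and `p, f > 0`, the direction `(1, -L)` is one, which is
impossible.
-/

open Set Filter Topology

theorem exists_eventually_abs_sub_mul_eq {a b : ℝ} (h : a = 0 → b = 0) :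
    ∃ c : ℝ, ∀ᶠ s in 𝓝 (0 : ℝ), |a - s * b| = |a| - s * c := by
  have hcont : Tendsto (fun s : ℝ => a - s * b) (𝓝 0) (𝓝 a) :=
    (by fun_prop : Continuous fun s : ℝ => a - s * b).tendsto' 0 a (by simp)
  rcases lt_trichotomy a 0 with ha | rfl | ha
  · refine ⟨-b, (hcont.eventually_lt_const ha).mono fun s hs => ?_⟩
    rw [abs_of_neg hs, abs_of_neg ha]
    ring
  · exact ⟨0, Eventually.of_forall fun s => by simp [h rfl]⟩
  · refine ⟨b, (hcont.eventually_const_lt ha).mono fun s hs => ?_⟩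
    rw [abs_of_pos hs, abs_of_pos ha]

theorem exists_eventually_sum_mul_abs_sub_mul_eq {ι : Type*} (D : Finset ι) (w a b : ι → ℝ)
    (h : ∀ i ∈ D, a i = 0 → b i = 0) :
    ∃ C : ℝ, ∀ᶠ s in 𝓝 (0 : ℝ),
      ∑ i ∈ D, w i * |a i - s * b i| = ∑ i ∈ D, w i * |a i| - s * C := by
  choose! c hc using fun i hi => exists_eventually_abs_sub_mul_eq (h i hi)
  refine ⟨∑ i ∈ D, w i * c i, ((eventually_all_finset D).2 hc).mono fun s hs => ?_⟩
  rw [Finset.sum_congr rfl fun i hi => by rw [hs i hi], Finset.mul_sum, ← Finset.sum_sub_distrib]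
  exact Finset.sum_congr rfl fun i _ => by ring

theorem isClosed_setOf_isMinOn {X α : Type*} [TopologicalSpace X] [Preorder α] [TopologicalSpace α]
    [OrderClosedTopology α] {Q : Set X} {F : X → α} (hQ : IsClosed Q) (hF : Continuous F) :
    IsClosed {y ∈ Q | IsMinOn F Q y} := by
  have : {y ∈ Q | IsMinOn F Q y} = Q ∩ ⋂ z ∈ Q, {y | F y ≤ F z} := by
    ext y
    simp [isMinOn_iff]
  rw [this]
  exact hQ.inter (isClosed_biInter fun z _ => isClosed_le hF continuous_const)

/-- If `v ≠ 0`, `x` would be the midpoint of the two minimizers `x ± s • v` for small `s > 0`. -/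
theorem eq_zero_of_mem_extremePoints_of_eventually_eq {E : Type*} [AddCommGroup E] [Module ℝ E]
    {Q : Set E} {F : E → ℝ} {x v : E} {C : ℝ}
    (hx : x ∈ {y ∈ Q | IsMinOn F Q y}.extremePoints ℝ)
    (hQ : ∀ᶠ s in 𝓝 (0 : ℝ), x + s • v ∈ Q)
    (hF : ∀ᶠ s in 𝓝 (0 : ℝ), F (x + s • v) = F x - s * C) : v = 0 := by
  have hboth := hQ.and hF
  have hpos : ∀ᶠ s in 𝓝[>] (0 : ℝ), 0 < s ∧ (x + s • v ∈ Q ∧ F (x + s • v) = F x - s * C) ∧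
      (x + (-s) • v ∈ Q ∧ F (x + (-s) • v) = F x - -s * C) :=
    eventually_mem_nhdsWithin.and <| nhdsWithin_le_nhds <|
      hboth.and ((continuous_neg.tendsto' (0 : ℝ) 0 neg_zero).eventually hboth)
  obtain ⟨s, hs, ⟨hQpos, hFpos⟩, hQneg, hFneg⟩ := hpos.exists
  have hmin := hx.1.2
  have hle := isMinOn_iff.1 hmin _ hQpos
  have hle' := isMinOn_iff.1 hmin _ hQneg
  have hmem : ∀ σ : ℝ, x + σ • v ∈ Q → F (x + σ • v) = F x →
      x + σ • v ∈ {y ∈ Q | IsMinOn F Q y} :=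
    fun σ hσ hFσ => ⟨hσ, isMinOn_iff.2 fun z hz => hFσ ▸ isMinOn_iff.1 hmin z hz⟩
  have hmid : x ∈ openSegment ℝ (x + (-s) • v) (x + s • v) :=
    ⟨1 / 2, 1 / 2, by norm_num, by norm_num, by norm_num, by module⟩
  have hleft := hx.2 (hmem (-s) hQneg (by linarith)) (hmem s hQpos (by linarith)) hmid
  rw [add_eq_left, smul_eq_zero] at hleft
  exact hleft.resolve_left (by linarith)

/-- The minimizers of `p + f` on `M` form a compact exposed face of `M`; by Krein–Milman it has
an extreme point, which is then extreme in `M`. -/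
theorem extremePoints_nonempty_of_isClosed_of_subset_quadrant {M : Set (ℝ × ℝ)}
    (hM : IsClosed M) (hne : M.Nonempty) (hMQ : M ⊆ Ici 0 ×ˢ Ici 0) :
    (M.extremePoints ℝ).Nonempty := by
  let φ : ℝ × ℝ →L[ℝ] ℝ := ContinuousLinearMap.fst ℝ ℝ ℝ + ContinuousLinearMap.snd ℝ ℝ ℝ
  obtain ⟨x₀, hx₀⟩ := hne
  have hbound : ∀ y ∈ M, φ y ≤ φ x₀ → y ∈ Icc 0 (φ x₀, φ x₀) := by
    intro y hy hφ
    obtain ⟨h₁, h₂⟩ := hMQ hy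
    simp only [mem_Ici] at h₁ h₂
    simp only [φ, add_apply, ContinuousLinearMap.coe_fst',
      ContinuousLinearMap.coe_snd'] at hφ ⊢
    exact ⟨⟨h₁, h₂⟩, by linarith, by linarith⟩
  obtain ⟨x₁, hx₁, hmin⟩ := φ.continuous.continuousOn.exists_isMinOn' hM hx₀ <|
    (hasBasis_cocompact.inf_principal _).eventually_iff.2
      ⟨_, isCompact_Icc, fun y ⟨hyK, hyM⟩ => not_lt.1 fun h => hyK (hbound y hyM h.le)⟩
  have hface : IsExposed ℝ M {y ∈ M | ∀ z ∈ M, (-φ) z ≤ (-φ) y} := fun _ => ⟨-φ, rfl⟩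
  have hcompact : IsCompact {y ∈ M | ∀ z ∈ M, (-φ) z ≤ (-φ) y} :=
    isCompact_Icc.of_isClosed_subset (hface.isClosed hM) fun y hy =>
      hbound y hy.1 (by simpa using hy.2 x₀ hx₀)
  obtain ⟨x, hx⟩ := hcompact.extremePoints_nonempty
    ⟨x₁, hx₁, fun z hz => by simpa using isMinOn_iff.1 hmin z hz⟩
  exact ⟨x, hface.isExtreme.extremePoints_subset_extremePoints hx⟩

section TariffCost

variable {ι : Type*} (D : Finset ι) (r : ι → ℝ) (t : ι → ℕ) (l : ι → ℝ)

def tariffCost (x : ℝ × ℝ) : ℝ :=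
  ∑ d ∈ D, (t d : ℝ) * |r d - (x.1 * l d + x.2)|

theorem continuous_tariffCost : Continuous (tariffCost D r t l) :=
  continuous_finsetSum _ fun _ _ => by fun_prop

theorem add_le_tariffCost_add_tariffCost_zero (ht : ∀ d ∈ D, 1 ≤ t d) {d : ι} (hd : d ∈ D)
    (y : ℝ × ℝ) : y.1 * l d + y.2 ≤ tariffCost D r t l y + tariffCost D r t l 0 := by
  have hterm : ∀ z : ℝ × ℝ, |r d - (z.1 * l d + z.2)| ≤ tariffCost D r t l z := fun z =>
    (le_mul_of_one_le_left (abs_nonneg _) (by exact_mod_cast ht d hd)).trans <|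
      Finset.single_le_sum (f := fun d => (t d : ℝ) * |r d - (z.1 * l d + z.2)|)
        (fun _ _ => by positivity) hd
  have hy := hterm y
  have h₀ := hterm 0
  simp only [Prod.fst_zero, Prod.snd_zero, zero_mul, add_zero, sub_zero] at h₀
  linarith [neg_abs_le (r d - (y.1 * l d + y.2)), le_abs_self (r d)]

theorem exists_isMinOn_tariffCost (hD : D.Nonempty) (ht : ∀ d ∈ D, 1 ≤ t d)
    (hl : ∀ d ∈ D, 0 ≤ l d) :
    ∃ x ∈ Ici (0 : ℝ) ×ˢ Ici (0 : ℝ), IsMinOn (tariffCost D r t l) (Ici 0 ×ˢ Ici 0) x := by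
  set F := tariffCost D r t l
  set c : ℝ := 2 * F 0
  by_cases hl₀ : ∀ d ∈ D, l d = 0
  · obtain ⟨d₀, hd₀⟩ := hD
    -- `F` is not coercive in `p` here, so minimize over the ray `p = 0`
    have hproj : ∀ y : ℝ × ℝ, F y = F (0, y.2) := fun y =>
      Finset.sum_congr rfl fun d hd => by simp [hl₀ d hd]
    obtain ⟨x, ⟨hx₁, hx₂⟩, hmin⟩ := (continuous_tariffCost D r t l).continuousOn.exists_isMinOn'
      (isClosed_singleton.prod isClosed_Ici) (x₀ := 0) ⟨rfl, mem_Ici.2 le_rfl⟩ <|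
      (hasBasis_cocompact.inf_principal _).eventually_iff.2 ⟨Icc 0 (0, c), isCompact_Icc,
        fun y ⟨hyK, hy₁, hy₂⟩ => not_lt.1 fun h => hyK ⟨⟨hy₁.ge, hy₂⟩, hy₁.le, by
          have := add_le_tariffCost_add_tariffCost_zero D r t l ht hd₀ y
          simp only [mem_singleton_iff, Prod.fst_zero] at hy₁
          simp only [hy₁, zero_mul, zero_add] at this
          linarith⟩⟩
    refine ⟨x, ⟨hx₁.ge, hx₂⟩, isMinOn_iff.2 fun y hy => ?_⟩
    rw [hproj y]
    exact isMinOn_iff.1 hmin _ ⟨rfl, hy.2⟩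
  · obtain ⟨d₁, hd₁, hl₁⟩ : ∃ d ∈ D, l d ≠ 0 := by simpa using hl₀
    have hl₁ : 0 < l d₁ := (hl d₁ hd₁).lt_of_ne' hl₁
    refine (continuous_tariffCost D r t l).continuousOn.exists_isMinOn'
      (isClosed_Ici.prod isClosed_Ici) (x₀ := 0) ⟨mem_Ici.2 le_rfl, mem_Ici.2 le_rfl⟩ <|
      (hasBasis_cocompact.inf_principal _).eventually_iff.2 ⟨Icc 0 (c / l d₁, c), isCompact_Icc,
        fun y ⟨hyK, hy₁, hy₂⟩ => not_lt.1 fun h => hyK ⟨⟨hy₁, hy₂⟩, ?_⟩⟩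
    have := add_le_tariffCost_add_tariffCost_zero D r t l ht hd₁ y
    have hpl : 0 ≤ y.1 * l d₁ := mul_nonneg hy₁ hl₁.le
    exact ⟨(le_div_iff₀ hl₁).2 (by linarith [mem_Ici.1 hy₂]), by linarith⟩

theorem exists_eventually_tariffCost_add_smul_eq (x v : ℝ × ℝ)
    (hv : ∀ d ∈ D, r d = x.1 * l d + x.2 → v.1 * l d + v.2 = 0) :
    ∃ C : ℝ, ∀ᶠ s in 𝓝 (0 : ℝ),
      tariffCost D r t l (x + s • v) = tariffCost D r t l x - s * C := by
  obtain ⟨C, hC⟩ := exists_eventually_sum_mul_abs_sub_mul_eq D (fun d => (t d : ℝ))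
    (fun d => r d - (x.1 * l d + x.2)) (fun d => v.1 * l d + v.2)
    fun d hd h => hv d hd (sub_eq_zero.1 h)
  refine ⟨C, hC.mono fun s hs => ?_⟩
  rw [tariffCost, tariffCost, ← hs]
  refine Finset.sum_congr rfl fun d _ => ?_
  congr 2
  simp only [Prod.fst_add, Prod.snd_add, Prod.smul_fst, Prod.smul_snd, smul_eq_mul]
  ring

theorem meets_reference_prices_of_mem_extremePoints {x : ℝ × ℝ}
    (hx : x ∈ {y ∈ Ici (0 : ℝ) ×ˢ Ici (0 : ℝ) |
      IsMinOn (tariffCost D r t l) (Ici 0 ×ˢ Ici 0) y}.extremePoints ℝ) :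
    (∃ d₁ ∈ D, ∃ d₂ ∈ D, d₁ ≠ d₂ ∧ l d₁ ≠ l d₂ ∧
        r d₁ = x.1 * l d₁ + x.2 ∧ r d₂ = x.1 * l d₂ + x.2) ∨
      (∃ d ∈ D, r d = x.1 * l d + x.2 ∧ (x.1 = 0 ∨ x.2 = 0)) ∨ (x.1 = 0 ∧ x.2 = 0) := by
  obtain ⟨hp, hf⟩ : 0 ≤ x.1 ∧ 0 ≤ x.2 := hx.1.1
  by_cases hexact : ∃ d ∈ D, r d = x.1 * l d + x.2
  · obtain ⟨d₀, hd₀, hr₀⟩ := hexact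
    by_cases hzero : x.1 = 0 ∨ x.2 = 0
    · exact Or.inr (Or.inl ⟨d₀, hd₀, hr₀, hzero⟩)
    by_cases hpair : ∃ d ∈ D, r d = x.1 * l d + x.2 ∧ l d ≠ l d₀
    · obtain ⟨d, hd, hrd, hld⟩ := hpair
      exact Or.inl ⟨d, hd, d₀, hd₀, fun h => hld (h ▸ rfl), hld, hrd, hr₀⟩
    simp only [not_or, not_exists, not_and, not_not] at hzero hpair
    obtain ⟨C, hC⟩ := exists_eventually_tariffCost_add_smul_eq D r t l x (1, -l d₀)
      fun d hd hrd => by simp [hpair d hd hrd]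
    have hQ : ∀ᶠ s in 𝓝 (0 : ℝ), x + s • ((1 : ℝ), -l d₀) ∈ Ici (0 : ℝ) ×ˢ Ici (0 : ℝ) :=
      ((by fun_prop : Continuous fun s : ℝ => x + s • ((1 : ℝ), -l d₀)).tendsto' 0 x
        (by simp)).eventually <|
        prod_mem_nhds (Ici_mem_nhds (hp.lt_of_ne' hzero.1)) (Ici_mem_nhds (hf.lt_of_ne' hzero.2))
    simpa using eq_zero_of_mem_extremePoints_of_eventually_eq hx hQ hC
  · simp only [not_exists, not_and] at hexact
    obtain ⟨C, hC⟩ := exists_eventually_tariffCost_add_smul_eq D r t l x x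
      fun d hd hrd => absurd hrd (hexact d hd)
    have hQ : ∀ᶠ s in 𝓝 (0 : ℝ), x + s • x ∈ Ici (0 : ℝ) ×ˢ Ici (0 : ℝ) :=
      (eventually_gt_nhds neg_one_lt_zero).mono fun s hs => by
        rw [show x + s • x = (1 + s) • x by module]
        exact ⟨mul_nonneg (by linarith) hp, mul_nonneg (by linarith) hf⟩
    have hx₀ := eq_zero_of_mem_extremePoints_of_eventually_eq hx hQ hC
    exact Or.inr (Or.inr ⟨by simp [hx₀], by simp [hx₀]⟩)

end TariffCost

theorem affine_distance_finite_dominating_set_general {ι : Type*} (D : Finset ι) (hD : D.Nonempty)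
    (r : ι → ℝ) (t : ι → ℕ) (l : ι → ℝ)
    (ht : ∀ d ∈ D, 1 ≤ t d) (hl : ∀ d ∈ D, 0 ≤ l d) :
    ∃ p f : ℝ, 0 ≤ p ∧ 0 ≤ f ∧
      (∀ p' f' : ℝ, 0 ≤ p' → 0 ≤ f' →
        ∑ d ∈ D, (t d : ℝ) * |r d - (p * l d + f)| ≤
          ∑ d ∈ D, (t d : ℝ) * |r d - (p' * l d + f')|) ∧
      ((∃ d₁ ∈ D, ∃ d₂ ∈ D, d₁ ≠ d₂ ∧ l d₁ ≠ l d₂ ∧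
          r d₁ = p * l d₁ + f ∧ r d₂ = p * l d₂ + f) ∨
        (∃ d ∈ D, r d = p * l d + f ∧ (p = 0 ∨ f = 0)) ∨
        (p = 0 ∧ f = 0)) := by
  have hQ : IsClosed (Ici (0 : ℝ) ×ˢ Ici (0 : ℝ)) := isClosed_Ici.prod isClosed_Ici
  obtain ⟨x, hx⟩ := extremePoints_nonempty_of_isClosed_of_subset_quadrant
    (isClosed_setOf_isMinOn hQ (continuous_tariffCost D r t l))
    (exists_isMinOn_tariffCost D r t l hD ht hl) fun y hy => hy.1
  obtain ⟨⟨hp, hf⟩, hmin⟩ := hx.1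
  exact ⟨x.1, x.2, hp, hf, fun p' f' hp' hf' => isMinOn_iff.1 hmin (p', f') ⟨hp', hf'⟩,
    meets_reference_prices_of_mem_extremePoints D r t l hx⟩

/-- Finite dominating set for the affine distance tariff design problem:
there is an optimal solution `(p, f)` (price per kilometer `p ≥ 0`, base amount `f ≥ 0`)
such that two reference prices with distinct distances are met exactly, or one reference
price is met exactly and `p = 0` or `f = 0`, or `p = 0` and `f = 0`. -/
theorem affine_distance_finite_dominating_set {ι : Type*} (D : Finset ι) (hD : D.Nonempty)
    (r : ι → ℝ) (t : ι → ℕ) (l : ι → ℝ)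
    (hr : ∀ d ∈ D, 0 ≤ r d) (ht : ∀ d ∈ D, 1 ≤ t d) (hl : ∀ d ∈ D, 0 ≤ l d) :
    ∃ p f : ℝ, 0 ≤ p ∧ 0 ≤ f ∧
      (∀ p' f' : ℝ, 0 ≤ p' → 0 ≤ f' →
        ∑ d ∈ D, (t d : ℝ) * |r d - (p * l d + f)| ≤
          ∑ d ∈ D, (t d : ℝ) * |r d - (p' * l d + f')|) ∧
      ((∃ d₁ ∈ D, ∃ d₂ ∈ D, d₁ ≠ d₂ ∧ l d₁ ≠ l d₂ ∧
          r d₁ = p * l d₁ + f ∧ r d₂ = p * l d₂ + f) ∨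
        (∃ d ∈ D, r d = p * l d + f ∧ (p = 0 ∨ f = 0)) ∨
        (p = 0 ∧ f = 0)) :=
  affine_distance_finite_dominating_set_general D hD r t l ht hl
end

section
/- Consider an instance of the zone tariff design problem, in any of the four variants (multiple or single counting, arbitrary or connected zones), optionally with the no-elongation constraint (P monotonically increasing) and/or the no-stopover constraint on P. Let r̄ = max{r_d : d ∈ D}. Then every optimal solution (𝒵, P) satisfies P(k) ≤ r̄ for every k ∈ ℕ≥1 for which there exists an OD pair d ∈ D with σ(W_d) = k. In particular, there always exists an optimal solution (𝒵, P) with P(k) ≤ r̄ for all k ∈ ℕ≥1. -/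
open scoped Classical

noncomputable section

/-- A zone partition of the vertex set `V`: nonempty, pairwise disjoint zones covering `V`. -/
def IsZonePartition {V : Type*} (Z : Finset (Finset V)) : Prop :=
  (∀ A ∈ Z, A.Nonempty) ∧ (∀ A ∈ Z, ∀ B ∈ Z, A ≠ B → Disjoint A B) ∧
    ∀ v : V, ∃ A ∈ Z, v ∈ A

/-- `v` and `w` lie in a common zone of `Z`. -/
def SameZone {V : Type*} (Z : Finset (Finset V)) (v w : V) : Prop :=
  ∃ A ∈ Z, v ∈ A ∧ w ∈ A

/-- Multiple-counting zone function: one plus the number of zone borders crossed along `W`. -/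
def sigmaM {V : Type*} (Z : Finset (Finset V)) (W : List V) : ℕ :=
  1 + ((W.zip W.tail).filter (fun p => decide (¬ SameZone Z p.1 p.2))).length

/-- Single-counting zone function: the number of distinct zones met by `W`. -/
def sigmaS {V : Type*} (Z : Finset (Finset V)) (W : List V) : ℕ :=
  (Z.filter (fun A => ∃ v ∈ W, v ∈ A)).card

/-- Zone function for the chosen counting variant: multiple counting if `mult`,
single counting otherwise. -/
def sigmaV {V : Type*} (mult : Bool) (Z : Finset (Finset V)) (W : List V) : ℕ :=
  if mult then sigmaM Z W else sigmaS Z W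

/-- A zone is connected if the induced subgraph is connected. -/
def ZoneConnected {V : Type*} (G : SimpleGraph V) (A : Finset V) : Prop :=
  (G.induce (A : Set V)).Connected

/-- Objective value of the zone tariff design problem. -/
def zoneObj {V ι : Type*} (D : Finset ι) (r : ι → ℝ) (t : ι → ℕ) (Wd : ι → List V)
    (σ : Finset (Finset V) → List V → ℕ) (Z : Finset (Finset V)) (P : ℕ → ℝ) : ℝ :=
  ∑ d ∈ D, (t d : ℝ) * |r d - P (σ Z (Wd d))|

/-- The fare structure `π` satisfies the no-elongation property on the PTN `G`. -/
def NoElongationFare {V : Type*} (G : SimpleGraph V) (π : List V → ℝ) : Prop :=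
  ∀ W : List V, W.Chain' G.Adj → 2 ≤ W.length → π W.dropLast ≤ π W

/-- The fare structure `π` satisfies the no-stopover property on the PTN `G`:
splitting a path `(v_1, …, v_n)` at an intermediate station `v_i` (`2 ≤ i ≤ n - 1`,
one-based) never decreases the total fare. -/
def NoStopoverFare {V : Type*} (G : SimpleGraph V) (π : List V → ℝ) : Prop :=
  ∀ W : List V, W.Chain' G.Adj → ∀ i : ℕ, 2 ≤ i → i ≤ W.length - 1 →
    π W ≤ π (W.take i) + π (W.drop (i - 1))

/-- Feasible solution of the zone tariff design problem with at most `N` zones: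
variant flags `mult` (multiple vs. single counting), `reqConn` (connected zones required),
`reqElong` (no-elongation property required) and `reqStop` (no-stopover property required). -/
def FeasibleZT {V : Type*} (G : SimpleGraph V) (N : ℕ) (mult : Bool)
    (reqConn reqElong reqStop : Prop) (Z : Finset (Finset V)) (P : ℕ → ℝ) : Prop :=
  IsZonePartition Z ∧ Z.card ≤ N ∧ (∀ k, 0 ≤ P k) ∧
    (reqConn → ∀ A ∈ Z, ZoneConnected G A) ∧
    (reqElong → NoElongationFare G (fun W => P (sigmaV mult Z W))) ∧
    (reqStop → NoStopoverFare G (fun W => P (sigmaV mult Z W)))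


private lemma abs_sub_min_le {r x c : ℝ} (hrc : r ≤ c) : |r - min x c| ≤ |r - x| := by
  rcases le_total x c with h | h
  · rw [min_eq_left h]
  · rw [min_eq_right h, abs_of_nonpos (by linarith), abs_of_nonpos (by linarith)]
    linarith

private lemma abs_sub_min_lt {r x c : ℝ} (hrc : r ≤ c) (hx : c < x) :
    |r - min x c| < |r - x| := by
  rw [min_eq_right hx.le, abs_of_nonpos (by linarith), abs_of_nonpos (by linarith)]
  linarith

private lemma min_add_min {x a b c : ℝ} (hc : 0 ≤ c) (ha : 0 ≤ a) (hb : 0 ≤ b)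
    (h : x ≤ a + b) : min x c ≤ min a c + min b c := by
  rcases le_or_gt c a with h1 | h1
  · have h2 : 0 ≤ min b c := le_min hb hc
    have h3 : min a c = c := min_eq_right h1
    calc min x c ≤ c := min_le_right _ _
      _ ≤ min a c + min b c := by rw [h3]; linarith
  rcases le_or_gt c b with h2 | h2
  · have h3 : 0 ≤ min a c := le_min ha hc
    have h4 : min b c = c := min_eq_right h2
    calc min x c ≤ c := min_le_right _ _
      _ ≤ min a c + min b c := by rw [h4]; linarith
  · rw [min_eq_left h1.le, min_eq_left h2.le]
    exact (min_le_left _ _).trans h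

private lemma feasible_trunc {V : Type*} (G : SimpleGraph V) (N : ℕ) (mult : Bool)
    (reqConn reqElong reqStop : Prop) (Z : Finset (Finset V)) (P : ℕ → ℝ) (c : ℝ) (hc : 0 ≤ c)
    (h : FeasibleZT G N mult reqConn reqElong reqStop Z P) :
    FeasibleZT G N mult reqConn reqElong reqStop Z (fun k => min (P k) c) := by
  obtain ⟨h1, h2, h3, h4, h5, h6⟩ := h
  refine ⟨h1, h2, fun k => le_min (h3 k) hc, h4, ?_, ?_⟩
  · intro hre W hWc hWl
    exact min_le_min (h5 hre W hWc hWl) le_rfl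
  · intro hrs W hWc i hi1 hi2
    exact min_add_min hc (h3 _) (h3 _) (h6 hrs W hWc i hi1 hi2)

private lemma obj_trunc_le {V ι : Type*} (D : Finset ι) (r : ι → ℝ) (t : ι → ℕ)
    (Wd : ι → List V) (σ : Finset (Finset V) → List V → ℕ) (Z : Finset (Finset V))
    (P : ℕ → ℝ) (c : ℝ) (hrc : ∀ d ∈ D, r d ≤ c) :
    zoneObj D r t Wd σ Z (fun k => min (P k) c) ≤ zoneObj D r t Wd σ Z P := by
  unfold zoneObj
  exact Finset.sum_le_sum fun d hd =>
    mul_le_mul_of_nonneg_left (abs_sub_min_le (hrc d hd)) (Nat.cast_nonneg _)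

/-- In every variant of the zone tariff design problem, every optimal solution has all
prices at attained numbers of traversed zones bounded by the maximum reference price, and
there always exists an optimal solution whose prices are bounded by the maximum reference
price everywhere. -/
theorem optimal_zone_prices_bounded_by_max_reference {V ι : Type*} [Fintype V] [Nonempty V]
    (G : SimpleGraph V) (hG : G.Connected)
    (D : Finset ι) (hD : D.Nonempty) (r : ι → ℝ) (t : ι → ℕ) (Wd : ι → List V)
    (hr : ∀ d ∈ D, 0 ≤ r d) (ht : ∀ d ∈ D, 1 ≤ t d)
    (hW : ∀ d ∈ D, (Wd d).Chain' G.Adj ∧ Wd d ≠ [])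
    (N : ℕ) (hN : 1 ≤ N) (mult : Bool) (reqConn reqElong reqStop : Prop) :
    (∀ Z P, FeasibleZT G N mult reqConn reqElong reqStop Z P →
      (∀ Z' P', FeasibleZT G N mult reqConn reqElong reqStop Z' P' →
        zoneObj D r t Wd (sigmaV mult) Z P ≤ zoneObj D r t Wd (sigmaV mult) Z' P') →
      ∀ k : ℕ, (∃ d ∈ D, sigmaV mult Z (Wd d) = k) → P k ≤ D.sup' hD r) ∧
    ∃ Z P, FeasibleZT G N mult reqConn reqElong reqStop Z P ∧
      (∀ Z' P', FeasibleZT G N mult reqConn reqElong reqStop Z' P' →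
        zoneObj D r t Wd (sigmaV mult) Z P ≤ zoneObj D r t Wd (sigmaV mult) Z' P') ∧
      ∀ k : ℕ, 1 ≤ k → P k ≤ D.sup' hD r := by
  classical
  set c : ℝ := D.sup' hD r with hcdef
  obtain ⟨d0, hd0⟩ := hD
  have hrc : ∀ d ∈ D, r d ≤ c := fun d hd => Finset.le_sup' r hd
  have hc0 : 0 ≤ c := (hr d0 hd0).trans (hrc d0 hd0)
  constructor
  · -- Part 1: every optimal solution is bounded at attained values
    rintro Z P hfeas hopt k ⟨d, hd, hσ⟩
    by_contra hgt
    push_neg at hgt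
    have hfeas' := feasible_trunc G N mult reqConn reqElong reqStop Z P c hc0 hfeas
    have hle := hopt Z (fun k => min (P k) c) hfeas'
    have hlt : zoneObj D r t Wd (sigmaV mult) Z (fun k => min (P k) c)
        < zoneObj D r t Wd (sigmaV mult) Z P := by
      unfold zoneObj
      apply Finset.sum_lt_sum
      · intro i hi
        exact mul_le_mul_of_nonneg_left (abs_sub_min_le (hrc i hi)) (Nat.cast_nonneg _)
      · refine ⟨d, hd, ?_⟩
        have htd : (0 : ℝ) < (t d : ℝ) := by
          have := ht d hd
          exact_mod_cast Nat.lt_of_lt_of_le Nat.zero_lt_one this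
        apply mul_lt_mul_of_pos_left _ htd
        rw [hσ]
        exact abs_sub_min_lt (hrc d hd) hgt
    linarith
  · -- Part 2: existence of an optimal solution with bounded prices
    set S : Finset (Finset V) → Set (ℕ → ℝ) := fun Z =>
      {P | (∀ k, P k ∈ Set.Icc (0:ℝ) c) ∧
        (reqElong → NoElongationFare G (fun W => P (sigmaV mult Z W))) ∧
        (reqStop → NoStopoverFare G (fun W => P (sigmaV mult Z W)))} with hSdef
    have hScompact : ∀ Z, IsCompact (S Z) := by
      intro Z
      have h1 : IsCompact (Set.pi Set.univ fun _ : ℕ => Set.Icc (0:ℝ) c) :=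
        isCompact_univ_pi fun _ => isCompact_Icc
      have hce : IsClosed {P : ℕ → ℝ |
          reqElong → NoElongationFare G (fun W => P (sigmaV mult Z W))} := by
        by_cases hre : reqElong
        · have heq : {P : ℕ → ℝ |
              reqElong → NoElongationFare G (fun W => P (sigmaV mult Z W))} =
              ⋂ (W : List V) (_ : W.Chain' G.Adj) (_ : 2 ≤ W.length),
                {P : ℕ → ℝ | P (sigmaV mult Z W.dropLast) ≤ P (sigmaV mult Z W)} := by
            ext P
            simp [NoElongationFare, hre]
          rw [heq]
          exact isClosed_iInter fun W => isClosed_iInter fun _ => isClosed_iInter fun _ =>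
            isClosed_le (continuous_apply _) (continuous_apply _)
        · have heq : {P : ℕ → ℝ |
              reqElong → NoElongationFare G (fun W => P (sigmaV mult Z W))} = Set.univ := by
            ext P; simp [hre]
          rw [heq]; exact isClosed_univ
      have hcs : IsClosed {P : ℕ → ℝ |
          reqStop → NoStopoverFare G (fun W => P (sigmaV mult Z W))} := by
        by_cases hrs : reqStop
        · have heq : {P : ℕ → ℝ |
              reqStop → NoStopoverFare G (fun W => P (sigmaV mult Z W))} =
              ⋂ (W : List V) (_ : W.Chain' G.Adj) (i : ℕ) (_ : 2 ≤ i) (_ : i ≤ W.length - 1),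
                {P : ℕ → ℝ | P (sigmaV mult Z W) ≤
                  P (sigmaV mult Z (W.take i)) + P (sigmaV mult Z (W.drop (i - 1)))} := by
            ext P
            simp [NoStopoverFare, hrs]
          rw [heq]
          exact isClosed_iInter fun W => isClosed_iInter fun _ => isClosed_iInter fun i =>
            isClosed_iInter fun _ => isClosed_iInter fun _ =>
              isClosed_le (continuous_apply _)
                ((continuous_apply (sigmaV mult Z (W.take i))).add
                  (continuous_apply (sigmaV mult Z (W.drop (i - 1)))))
        · have heq : {P : ℕ → ℝ |
              reqStop → NoStopoverFare G (fun W => P (sigmaV mult Z W))} = Set.univ := by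
            ext P; simp [hrs]
          rw [heq]; exact isClosed_univ
      have heq : S Z = (Set.pi Set.univ fun _ : ℕ => Set.Icc (0:ℝ) c) ∩
          ({P : ℕ → ℝ | reqElong → NoElongationFare G (fun W => P (sigmaV mult Z W))} ∩
           {P : ℕ → ℝ | reqStop → NoStopoverFare G (fun W => P (sigmaV mult Z W))}) := by
        ext P
        constructor
        · rintro ⟨hIcc, he, hs⟩
          exact ⟨fun k _ => hIcc k, he, hs⟩
        · rintro ⟨hIcc, he, hs⟩
          exact ⟨fun k => hIcc k (Set.mem_univ _), he, hs⟩
      rw [heq]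
      exact h1.inter_right (hce.inter hcs)
    have hSne : ∀ Z, (S Z).Nonempty := by
      intro Z
      refine ⟨fun _ => 0, ⟨fun k => ⟨le_rfl, hc0⟩, fun _ W _ _ => le_rfl,
        fun _ W _ i _ _ => by norm_num⟩⟩
    have hcont : ∀ Z : Finset (Finset V),
        Continuous (fun P : ℕ → ℝ => zoneObj D r t Wd (sigmaV mult) Z P) := by
      intro Z
      unfold zoneObj
      exact continuous_finset_sum _ fun d _ =>
        continuous_const.mul ((continuous_const.sub (continuous_apply _)).abs)
    have hmin : ∀ Z : Finset (Finset V), ∃ P ∈ S Z,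
        ∀ Q ∈ S Z, zoneObj D r t Wd (sigmaV mult) Z P ≤ zoneObj D r t Wd (sigmaV mult) Z Q := by
      intro Z
      obtain ⟨P, hP, hPm⟩ := (hScompact Z).exists_isMinOn (hSne Z) (hcont Z).continuousOn
      exact ⟨P, hP, fun Q hQ => hPm hQ⟩
    choose Pm hPmem hPmin using hmin
    set T : Finset (Finset (Finset V)) := Finset.univ.filter
      (fun Z => IsZonePartition Z ∧ Z.card ≤ N ∧ (reqConn → ∀ A ∈ Z, ZoneConnected G A))
      with hTdef
    have hTne : T.Nonempty := by
      refine ⟨{Finset.univ}, Finset.mem_filter.mpr ⟨Finset.mem_univ _, ?_, ?_, ?_⟩⟩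
      · refine ⟨?_, ?_, ?_⟩
        · intro A hA
          rw [Finset.mem_singleton] at hA
          subst hA
          exact Finset.univ_nonempty
        · intro A hA B hB hne
          rw [Finset.mem_singleton] at hA hB
          exact absurd (hA.trans hB.symm) hne
        · intro v
          exact ⟨Finset.univ, Finset.mem_singleton_self _, Finset.mem_univ v⟩
      · rw [Finset.card_singleton]; exact hN
      · intro _ A hA
        rw [Finset.mem_singleton] at hA
        subst hA
        unfold ZoneConnected
        rw [Finset.coe_univ]
        exact (SimpleGraph.Iso.connected_iff (SimpleGraph.induceUnivIso G)).mpr hG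
    obtain ⟨Zs, hZsT, hZsmin⟩ :=
      Finset.exists_min_image T (fun Z => zoneObj D r t Wd (sigmaV mult) Z (Pm Z)) hTne
    obtain ⟨hpart, hcard, hconn⟩ := (Finset.mem_filter.mp hZsT).2
    obtain ⟨hIcc, helong, hstop⟩ := hPmem Zs
    refine ⟨Zs, Pm Zs, ⟨hpart, hcard, fun k => (hIcc k).1, hconn, helong, hstop⟩, ?_, ?_⟩
    · intro Z' P' hfeas'
      have hZ'T : Z' ∈ T := Finset.mem_filter.mpr
        ⟨Finset.mem_univ _, hfeas'.1, hfeas'.2.1, hfeas'.2.2.2.1⟩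
      have htr := feasible_trunc G N mult reqConn reqElong reqStop Z' P' c hc0 hfeas'
      have hP'S : (fun k => min (P' k) c) ∈ S Z' := by
        obtain ⟨_, _, h3, _, h5, h6⟩ := htr
        exact ⟨fun k => ⟨h3 k, min_le_right _ _⟩, h5, h6⟩
      calc zoneObj D r t Wd (sigmaV mult) Zs (Pm Zs)
          ≤ zoneObj D r t Wd (sigmaV mult) Z' (Pm Z') := hZsmin Z' hZ'T
        _ ≤ zoneObj D r t Wd (sigmaV mult) Z' (fun k => min (P' k) c) :=
            hPmin Z' _ hP'S
        _ ≤ zoneObj D r t Wd (sigmaV mult) Z' P' :=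
            obj_trunc_le D r t Wd (sigmaV mult) Z' P' c hrc
    · intro k _
      exact (hIcc k).2


end
end

section
/- Let G = (V,E) be a tree (a connected acyclic finite simple graph) and let 𝒵 be a zone partition of V in which every zone is connected. Then for every simple path W in G (a path without repeated vertices), the multiple-counting and single-counting zone functions coincide: σ_M(W) = σ_S(W). Consequently, for every instance of the zone tariff design problem on a tree in which each fixed path W_d is the unique simple path between its endpoints, the optimal values of the connected-zones variants coincide: z*_MC = z*_SC. -/
open scoped Classical
noncomputable section

/-- Optimal (infimum) objective value over all feasible zone partitions and
nonnegative price functions. -/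
def zStar {V ι : Type*} (D : Finset ι) (r : ι → ℝ) (t : ι → ℕ) (Wd : ι → List V)
    (σ : Finset (Finset V) → List V → ℕ) (feas : Finset (Finset V) → Prop) : ℝ :=
  sInf {x : ℝ | ∃ Z P, feas Z ∧ (∀ k, 0 ≤ P k) ∧ x = zoneObj D r t Wd σ Z P}

/-!
Along a simple path in an acyclic graph every connected zone is met in one contiguous
stretch: if the path leaves a zone `A` and later returns to it, the piece in between is the
unique path joining two vertices of `A`, and connectivity of `A` puts a path inside `A` between
them. So each border crossing enters a zone not met before, and `1 + #crossings = #zones met`.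
Equal zone functions on all fixed paths give equal objectives for every feasible zone
partition and price function, hence equal optimal values.
-/

namespace List

variable {α β : Type*}

def ContiguousFibers (f : α → β) (L : List α) : Prop :=
  ∀ (p q r : List α) (u v : α), L = p ++ u :: (q ++ v :: r) → f u = f v → ∀ y ∈ q, f y = f u

theorem ContiguousFibers.of_cons {f : α → β} {a : α} {L : List α}
    (h : (a :: L).ContiguousFibers f) : L.ContiguousFibers f :=
  fun p q r u v hL => h (a :: p) q r u v (by simp [hL])

theorem ContiguousFibers.notMem_map_of_ne {f : α → β} {a b : α} {L : List α}
    (h : (a :: b :: L).ContiguousFibers f) (hab : f a ≠ f b) : f a ∉ L.map f := by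
  intro hmem
  obtain ⟨m, hm, hfm⟩ := List.mem_map.mp hmem
  obtain ⟨s, t, rfl⟩ := List.append_of_mem hm
  exact hab (h [] (b :: s) t a m (by simp) hfm.symm b (by simp)).symm

theorem ContiguousFibers.card_toFinset_map [DecidableEq β] {f : α → β} :
    ∀ {L : List α}, L ≠ [] → L.ContiguousFibers f →
      (L.map f).toFinset.card = (L.zip L.tail).countP (fun q => f q.1 ≠ f q.2) + 1
  | [a], _, _ => by simp
  | a :: b :: M, _, h => by
    have ih := card_toFinset_map (L := b :: M) (by simp) h.of_cons
    simp only [List.tail_cons] at ih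
    by_cases hab : f a = f b
    · rw [List.map_cons, List.toFinset_cons, Finset.insert_eq_of_mem (by simp [hab]), ih]
      simp [hab]
    · have hnot : f a ∉ ((b :: M).map f).toFinset := by
        simpa [hab] using h.notMem_map_of_ne hab
      rw [List.map_cons, List.toFinset_cons, Finset.card_insert_of_notMem hnot, ih]
      simp [hab]

end List

namespace SimpleGraph

variable {V : Type*} {G : SimpleGraph V}

theorem IsAcyclic.support_subset_of_isPath (hG : G.IsAcyclic) {s : Set V}
    (hs : (G.induce s).Preconnected) {u v : V} (hu : u ∈ s) (hv : v ∈ s) {p : G.Walk u v}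
    (hp : p.IsPath) : ∀ x ∈ p.support, x ∈ s := by
  obtain ⟨q⟩ := hs ⟨u, hu⟩ ⟨v, hv⟩
  let q' : G.Walk u v := q.map (Embedding.induce s).toHom
  have hq' : ∀ x ∈ q'.support, x ∈ s := by
    intro x hx
    obtain ⟨⟨y, hy⟩, -, rfl⟩ := List.mem_map.mp (Walk.support_map _ q ▸ hx)
    exact hy
  have hpq : p = q'.bypass := congrArg Subtype.val
    ((hG.subsingleton_path u v).elim ⟨p, hp⟩ ⟨_, q'.bypass_isPath⟩)
  exact fun x hx => hq' x (q'.support_bypass_subset_support (hpq ▸ hx))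

theorem IsAcyclic.mem_of_isChain (hG : G.IsAcyclic) {s : Set V}
    (hs : (G.induce s).Preconnected) {u v : V} {l : List V}
    (hchain : (u :: (l ++ [v])).IsChain G.Adj) (hnodup : (u :: (l ++ [v])).Nodup)
    (hu : u ∈ s) (hv : v ∈ s) : ∀ x ∈ l, x ∈ s := by
  let p : G.Walk u ((u :: (l ++ [v])).getLast (List.cons_ne_nil _ _)) :=
    Walk.ofSupport _ _ hchain
  have hsupport : p.support = u :: (l ++ [v]) := Walk.support_ofSupport _ _
  have hp : p.IsPath := by rwa [Walk.isPath_def, hsupport]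
  intro x hx
  exact hG.support_subset_of_isPath hs hu (by simpa using hv) hp x (by simp [hsupport, hx])

end SimpleGraph

namespace IsZonePartition

variable {V : Type*} {Z : Finset (Finset V)} (hZ : IsZonePartition Z)

def zoneOf (v : V) : Finset V :=
  (hZ.2.2 v).choose

theorem zoneOf_mem (v : V) : hZ.zoneOf v ∈ Z :=
  (hZ.2.2 v).choose_spec.1

theorem mem_zoneOf (v : V) : v ∈ hZ.zoneOf v :=
  (hZ.2.2 v).choose_spec.2

theorem zoneOf_eq_of_mem {A : Finset V} {v : V} (hA : A ∈ Z) (hv : v ∈ A) :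
    hZ.zoneOf v = A := by
  by_contra h
  exact Finset.disjoint_left.mp (hZ.2.1 _ (hZ.zoneOf_mem v) A hA h) (hZ.mem_zoneOf v) hv

theorem sameZone_iff (v w : V) : SameZone Z v w ↔ hZ.zoneOf v = hZ.zoneOf w := by
  constructor
  · rintro ⟨A, hA, hv, hw⟩
    rw [hZ.zoneOf_eq_of_mem hA hv, hZ.zoneOf_eq_of_mem hA hw]
  · intro h
    exact ⟨hZ.zoneOf v, hZ.zoneOf_mem v, hZ.mem_zoneOf v, h ▸ hZ.mem_zoneOf w⟩

theorem sigmaM_eq (W : List V) :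
    sigmaM Z W = (W.zip W.tail).countP (fun q => hZ.zoneOf q.1 ≠ hZ.zoneOf q.2) + 1 := by
  simp [sigmaM, List.countP_eq_length_filter, hZ.sameZone_iff, add_comm]

theorem sigmaS_eq (W : List V) : sigmaS Z W = (W.map hZ.zoneOf).toFinset.card := by
  unfold sigmaS
  congr 1
  ext A
  simp only [Finset.mem_filter, List.mem_toFinset, List.mem_map]
  constructor
  · rintro ⟨hA, v, hvW, hvA⟩
    exact ⟨v, hvW, hZ.zoneOf_eq_of_mem hA hvA⟩
  · rintro ⟨v, hvW, rfl⟩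
    exact ⟨hZ.zoneOf_mem v, v, hvW, hZ.mem_zoneOf v⟩

end IsZonePartition

theorem sigmaM_eq_sigmaS_of_isAcyclic {V : Type*} {G : SimpleGraph V} (hG : G.IsAcyclic)
    {Z : Finset (Finset V)} (hZ : IsZonePartition Z) (hconn : ∀ A ∈ Z, ZoneConnected G A)
    {W : List V} (hc : W.IsChain G.Adj) (hn : W.Nodup) (hne : W ≠ []) :
    sigmaM Z W = sigmaS Z W := by
  have hcontig : W.ContiguousFibers hZ.zoneOf := by
    rintro p q r u v rfl huv y hy
    have hinfix : u :: (q ++ [v]) <:+: p ++ u :: (q ++ v :: r) := ⟨p, r, by simp⟩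
    have hv : v ∈ hZ.zoneOf u := huv ▸ hZ.mem_zoneOf v
    exact hZ.zoneOf_eq_of_mem (hZ.zoneOf_mem u) <|
      hG.mem_of_isChain (hconn _ (hZ.zoneOf_mem u)).preconnected (hc.infix hinfix)
        (hn.sublist hinfix.sublist) (hZ.mem_zoneOf u) hv y hy
  rw [hZ.sigmaM_eq, hZ.sigmaS_eq, hcontig.card_toFinset_map hne]

theorem zoneObj_congr {V ι : Type*} {D : Finset ι} {r : ι → ℝ} {t : ι → ℕ} {Wd : ι → List V}
    {σ σ' : Finset (Finset V) → List V → ℕ} {Z : Finset (Finset V)}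
    (h : ∀ d ∈ D, σ Z (Wd d) = σ' Z (Wd d)) (P : ℕ → ℝ) :
    zoneObj D r t Wd σ Z P = zoneObj D r t Wd σ' Z P :=
  Finset.sum_congr rfl fun d hd => by rw [h d hd]

theorem zStar_congr {V ι : Type*} {D : Finset ι} {r : ι → ℝ} {t : ι → ℕ} {Wd : ι → List V}
    {σ σ' : Finset (Finset V) → List V → ℕ} {feas : Finset (Finset V) → Prop}
    (h : ∀ Z, feas Z → ∀ d ∈ D, σ Z (Wd d) = σ' Z (Wd d)) :
    zStar D r t Wd σ feas = zStar D r t Wd σ' feas := by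
  unfold zStar
  congr 1
  ext x
  constructor
  · rintro ⟨Z, P, hZ, hP, rfl⟩
    exact ⟨Z, P, hZ, hP, zoneObj_congr (h Z hZ) P⟩
  · rintro ⟨Z, P, hZ, hP, rfl⟩
    exact ⟨Z, P, hZ, hP, (zoneObj_congr (h Z hZ) P).symm⟩

theorem tree_connected_zones_MC_eq_SC_general {V ι : Type*}
    (G : SimpleGraph V) (hG : G.IsTree)
    (D : Finset ι) (r : ι → ℝ) (t : ι → ℕ) (Wd : ι → List V)
    (hW : ∀ d ∈ D, (Wd d).Chain' G.Adj ∧ (Wd d).Nodup ∧ Wd d ≠ [])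
    (N : ℕ) :
    (∀ Z : Finset (Finset V), IsZonePartition Z → (∀ A ∈ Z, ZoneConnected G A) →
      ∀ W : List V, W.Chain' G.Adj → W.Nodup → W ≠ [] → sigmaM Z W = sigmaS Z W) ∧
      zStar D r t Wd sigmaM
          (fun Z => IsZonePartition Z ∧ Z.card ≤ N ∧ ∀ A ∈ Z, ZoneConnected G A) =
        zStar D r t Wd sigmaS
          (fun Z => IsZonePartition Z ∧ Z.card ≤ N ∧ ∀ A ∈ Z, ZoneConnected G A) := by
  refine ⟨fun _ hZ hconn _ => sigmaM_eq_sigmaS_of_isAcyclic hG.isAcyclic hZ hconn,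
    zStar_congr fun _ ⟨hZ, _, hconn⟩ d hd => ?_⟩
  obtain ⟨hc, hn, hne⟩ := hW d hd
  exact sigmaM_eq_sigmaS_of_isAcyclic hG.isAcyclic hZ hconn hc hn hne

/-- On a tree with connected zones, the multiple-counting and single-counting zone
functions coincide on simple paths; consequently, for instances whose fixed paths are
the unique simple paths, the optimal values of the connected-zones variants with multiple
and single counting coincide. -/
theorem tree_connected_zones_MC_eq_SC {V ι : Type*} [Fintype V] [Nonempty V]
    (G : SimpleGraph V) (hG : G.IsTree)
    (D : Finset ι) (r : ι → ℝ) (t : ι → ℕ) (Wd : ι → List V)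
    (hr : ∀ d ∈ D, 0 ≤ r d) (ht : ∀ d ∈ D, 1 ≤ t d)
    (hW : ∀ d ∈ D, (Wd d).Chain' G.Adj ∧ (Wd d).Nodup ∧ Wd d ≠ [])
    (N : ℕ) (hN : 1 ≤ N) :
    (∀ Z : Finset (Finset V), IsZonePartition Z → (∀ A ∈ Z, ZoneConnected G A) →
      ∀ W : List V, W.Chain' G.Adj → W.Nodup → W ≠ [] → sigmaM Z W = sigmaS Z W) ∧
      zStar D r t Wd sigmaM
          (fun Z => IsZonePartition Z ∧ Z.card ≤ N ∧ ∀ A ∈ Z, ZoneConnected G A) =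
        zStar D r t Wd sigmaS
          (fun Z => IsZonePartition Z ∧ Z.card ≤ N ∧ ∀ A ∈ Z, ZoneConnected G A) :=
  tree_connected_zones_MC_eq_SC_general G hG D r t Wd hW N

end
end

section
/- Let G = (V,E) be a PTN and 𝒵 = {Z_1,…,Z_L} any zone partition of V. Let 𝒵' be the zone partition whose zones are the connected components of the induced subgraphs G[Z_i] for i = 1,…,L. Then: (i) L ≤ |𝒵'| ≤ |V| and every zone of 𝒵' is connected; (ii) for every path W in G, the multiple-counting zone function is unchanged, i.e., σ_M(W) computed with respect to 𝒵' equals σ_M(W) computed with respect to 𝒵. In particular, for any price function P, the objective value ∑_{d∈D} t_d |r_d − P(σ_M(W_d))| is the same for 𝒵 and 𝒵', and if N = |V| then z*_MA = z*_MC. -/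
open scoped Classical
noncomputable section

/-- The spanning subgraph of  keeping only edges whose endpoints lie in a common zone. -/
def restrictedGraph {V : Type*} (G : SimpleGraph V) (Z : Finset (Finset V)) :
    SimpleGraph V where
  Adj v w := G.Adj v w ∧ SameZone Z v w
  symm := by
    constructor
    intro v w h
    obtain ⟨A, hA, hv, hw⟩ := h.2
    exact ⟨h.1.symm, A, hA, hw, hv⟩
  loopless := ⟨fun v h => G.loopless.irrefl v h.1⟩

/-- The zone partition whose zones are the connected components of the subgraphs of `G`
induced by the zones of `Z`. -/
def refinedPartition {V : Type*} [Fintype V] (G : SimpleGraph V) (Z : Finset (Finset V)) :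
    Finset (Finset V) :=
  Finset.univ.image fun v =>
    Finset.univ.filter fun w => (restrictedGraph G Z).Reachable v w

/-!
Two vertices share a zone of the refined partition iff they are joined by a walk of `G` that
never leaves a zone of `Z`. For the endpoints of an edge of `G` this happens iff they share a
zone of `Z`, so a path crosses a border of the refined partition exactly where it crosses a
border of `Z`, and `σ_M` and the objective are unchanged. Every refined zone is a connected
component of the graph of within-zone edges, hence connected, and there are at most `|V|` of
them; so refining turns any feasible partition into a connected one with the same objective,
and the two optimal values are infima over the same set.
-/

theorem List.IsChain.rel_of_mem_zip_tail {α : Type*} {R : α → α → Prop} :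
    ∀ {l : List α}, l.IsChain R → ∀ {a b : α}, (a, b) ∈ l.zip l.tail → R a b
  | [], _, _, _, hab => by simp at hab
  | [_], _, _, _, hab => by simp at hab
  | _ :: _ :: _, h, _, _, hab => by
    rw [List.isChain_cons_cons] at h
    rcases List.mem_cons.mp hab with hab | hab
    · cases hab
      exact h.1
    · exact h.2.rel_of_mem_zip_tail hab

section Zones

variable {V : Type*}

theorem sigmaM_congr {Z Z' : Finset (Finset V)} {W : List V}
    (h : ∀ v w, (v, w) ∈ W.zip W.tail → (SameZone Z v w ↔ SameZone Z' v w)) :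
    sigmaM Z W = sigmaM Z' W := by
  unfold sigmaM
  congr 2
  refine List.filter_congr fun p hp => ?_
  simp only [h p.1 p.2 hp]

theorem restrictedGraph_le {G : SimpleGraph V} {Z : Finset (Finset V)} :
    restrictedGraph G Z ≤ G :=
  fun _ _ h => h.1

namespace IsZonePartition

variable {Z : Finset (Finset V)}

theorem eq_of_mem_of_mem (hZ : IsZonePartition Z) {A B : Finset V} (hA : A ∈ Z) (hB : B ∈ Z)
    {v : V} (hvA : v ∈ A) (hvB : v ∈ B) : A = B := by
  by_contra hne
  exact Finset.disjoint_left.mp (hZ.2.1 A hA B hB hne) hvA hvB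

theorem sameZone_refl (hZ : IsZonePartition Z) (v : V) : SameZone Z v v :=
  let ⟨A, hA, hv⟩ := hZ.2.2 v
  ⟨A, hA, hv, hv⟩

theorem sameZone_trans (hZ : IsZonePartition Z) {u v w : V} :
    SameZone Z u v → SameZone Z v w → SameZone Z u w
  | ⟨A, hA, hu, hvA⟩, ⟨_, hB, hvB, hw⟩ => ⟨A, hA, hu, hZ.eq_of_mem_of_mem hA hB hvA hvB ▸ hw⟩

theorem card_le_card_of_refines {Z' : Finset (Finset V)} (hZ : IsZonePartition Z)
    (hZ' : IsZonePartition Z') (hrefines : ∀ A ∈ Z', ∃ B ∈ Z, A ⊆ B) : Z.card ≤ Z'.card := by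
  refine Finset.card_le_card_of_forall_subsingleton (fun B A => A ⊆ B) ?_ ?_
  · intro B hB
    obtain ⟨v, hvB⟩ := hZ.1 B hB
    obtain ⟨A, hA, hvA⟩ := hZ'.2.2 v
    obtain ⟨B', hB', hAB'⟩ := hrefines A hA
    exact ⟨A, hA, hZ.eq_of_mem_of_mem hB' hB (hAB' hvA) hvB ▸ hAB'⟩
  · intro A hA B₁ ⟨hB₁, hAB₁⟩ B₂ ⟨hB₂, hAB₂⟩
    obtain ⟨v, hv⟩ := hZ'.1 A hA
    exact hZ.eq_of_mem_of_mem hB₁ hB₂ (hAB₁ hv) (hAB₂ hv)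

theorem sameZone_of_reachable_restrictedGraph (hZ : IsZonePartition Z) {G : SimpleGraph V}
    {v w : V} (h : (restrictedGraph G Z).Reachable v w) : SameZone Z v w := by
  rw [SimpleGraph.reachable_iff_reflTransGen] at h
  induction h with
  | refl => exact hZ.sameZone_refl v
  | tail _ hadj ih => exact hZ.sameZone_trans ih hadj.2

end IsZonePartition

end Zones

section ReachableClasses

variable {V : Type*} [Fintype V]

def reachableClasses (H : SimpleGraph V) : Finset (Finset V) :=
  Finset.univ.image fun v => Finset.univ.filter fun w => H.Reachable v w

variable (H : SimpleGraph V)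

theorem mem_reachableClasses {A : Finset V} :
    A ∈ reachableClasses H ↔ ∃ v, A = Finset.univ.filter fun w => H.Reachable v w := by
  simp only [reachableClasses, Finset.mem_image, Finset.mem_univ, true_and, eq_comm]

theorem sameZone_reachableClasses_iff {v w : V} :
    SameZone (reachableClasses H) v w ↔ H.Reachable v w := by
  constructor
  · rintro ⟨A, hA, hv, hw⟩
    obtain ⟨u, rfl⟩ := (mem_reachableClasses H).mp hA
    simp only [Finset.mem_filter, Finset.mem_univ, true_and] at hv hw
    exact hv.symm.trans hw
  · intro h
    exact ⟨_, (mem_reachableClasses H).mpr ⟨v, rfl⟩, by simp, by simpa using h⟩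

theorem isZonePartition_reachableClasses : IsZonePartition (reachableClasses H) := by
  refine ⟨?_, ?_, fun v => ⟨_, (mem_reachableClasses H).mpr ⟨v, rfl⟩, by simp⟩⟩
  · rintro A hA
    obtain ⟨v, rfl⟩ := (mem_reachableClasses H).mp hA
    exact ⟨v, by simp⟩
  · rintro A hA B hB hne
    obtain ⟨u, rfl⟩ := (mem_reachableClasses H).mp hA
    obtain ⟨u', rfl⟩ := (mem_reachableClasses H).mp hB
    refine Finset.disjoint_left.mpr fun x hx hx' => hne ?_
    simp only [Finset.mem_filter, Finset.mem_univ, true_and] at hx hx'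
    ext w
    simp only [Finset.mem_filter, Finset.mem_univ, true_and]
    exact ⟨(hx'.trans hx.symm).trans, (hx.trans hx'.symm).trans⟩

theorem card_reachableClasses_le : (reachableClasses H).card ≤ Fintype.card V :=
  Finset.card_image_le.trans_eq Finset.card_univ

theorem zoneConnected_of_mem_reachableClasses {G : SimpleGraph V} (hHG : H ≤ G) {A : Finset V}
    (hA : A ∈ reachableClasses H) : ZoneConnected G A := by
  obtain ⟨v, rfl⟩ := (mem_reachableClasses H).mp hA
  have hsupp : ((Finset.univ.filter fun w => H.Reachable v w : Finset V) : Set V) =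
      (H.connectedComponentMk v).supp := by
    ext w
    simp [SimpleGraph.ConnectedComponent.mem_supp_iff, SimpleGraph.ConnectedComponent.eq,
      SimpleGraph.reachable_comm]
  rw [ZoneConnected, hsupp]
  exact (SimpleGraph.ConnectedComponent.maximal_connected_induce_supp _).1.mono
    (SimpleGraph.comap_monotone _ hHG)

end ReachableClasses

section RefinedPartition

variable {V : Type*} [Fintype V] {G : SimpleGraph V} {Z : Finset (Finset V)}

theorem refinedPartition_eq_reachableClasses :
    refinedPartition G Z = reachableClasses (restrictedGraph G Z) :=
  rfl

namespace IsZonePartition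

theorem sameZone_refinedPartition_iff (hZ : IsZonePartition Z) {v w : V} (hadj : G.Adj v w) :
    SameZone (refinedPartition G Z) v w ↔ SameZone Z v w := by
  rw [refinedPartition_eq_reachableClasses, sameZone_reachableClasses_iff]
  exact ⟨hZ.sameZone_of_reachable_restrictedGraph, fun h => SimpleGraph.Adj.reachable ⟨hadj, h⟩⟩

theorem sigmaM_refinedPartition (hZ : IsZonePartition Z) {W : List V} (hW : W.IsChain G.Adj) :
    sigmaM (refinedPartition G Z) W = sigmaM Z W :=
  sigmaM_congr fun _ _ hvw => hZ.sameZone_refinedPartition_iff (hW.rel_of_mem_zip_tail hvw)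

theorem refinedPartition_refines (hZ : IsZonePartition Z) :
    ∀ A ∈ refinedPartition G Z, ∃ B ∈ Z, A ⊆ B := by
  intro A hA
  obtain ⟨v, rfl⟩ := (mem_reachableClasses _).mp hA
  obtain ⟨B, hB, hvB⟩ := hZ.2.2 v
  refine ⟨B, hB, fun w hw => ?_⟩
  obtain ⟨B', hB', hvB', hwB'⟩ :=
    hZ.sameZone_of_reachable_restrictedGraph (by simpa using hw)
  exact hZ.eq_of_mem_of_mem hB' hB hvB' hvB ▸ hwB'

end IsZonePartition

end RefinedPartition

theorem zStar_eq_of_forall_exists {V ι : Type*} {D : Finset ι} {r : ι → ℝ} {t : ι → ℕ}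
    {Wd : ι → List V} {σ : Finset (Finset V) → List V → ℕ}
    {feas₁ feas₂ : Finset (Finset V) → Prop} (h₂₁ : ∀ Z, feas₂ Z → feas₁ Z)
    (h₁₂ : ∀ Z, feas₁ Z →
      ∃ Z', feas₂ Z' ∧ ∀ P, zoneObj D r t Wd σ Z' P = zoneObj D r t Wd σ Z P) :
    zStar D r t Wd σ feas₁ = zStar D r t Wd σ feas₂ := by
  unfold zStar
  congr 1
  ext x
  constructor
  · rintro ⟨Z, P, hZ, hP, rfl⟩
    obtain ⟨Z', hZ', hobj⟩ := h₁₂ Z hZ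
    exact ⟨Z', P, hZ', hP, (hobj P).symm⟩
  · rintro ⟨Z, P, hZ, hP, rfl⟩
    exact ⟨Z, P, h₂₁ Z hZ, hP, rfl⟩

theorem refined_partition_preserves_multiple_counting_general {V ι : Type*} [Fintype V]
    (G : SimpleGraph V)
    (Z : Finset (Finset V)) (hZ : IsZonePartition Z)
    (D : Finset ι) (r : ι → ℝ) (t : ι → ℕ) (Wd : ι → List V)
    (hW : ∀ d ∈ D, (Wd d).Chain' G.Adj ∧ Wd d ≠ [])
    (N : ℕ) :
    (Z.card ≤ (refinedPartition G Z).card ∧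
      (refinedPartition G Z).card ≤ Fintype.card V ∧
      IsZonePartition (refinedPartition G Z) ∧
      (∀ A ∈ refinedPartition G Z, ZoneConnected G A) ∧
      ∀ A ∈ refinedPartition G Z, ∃ B ∈ Z, A ⊆ B) ∧
    (∀ W : List V, W.Chain' G.Adj → sigmaM (refinedPartition G Z) W = sigmaM Z W) ∧
    (∀ P : ℕ → ℝ,
      zoneObj D r t Wd sigmaM (refinedPartition G Z) P = zoneObj D r t Wd sigmaM Z P) ∧
    (N = Fintype.card V →
      zStar D r t Wd sigmaM (fun Z' => IsZonePartition Z' ∧ Z'.card ≤ N) =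
        zStar D r t Wd sigmaM
          (fun Z' => IsZonePartition Z' ∧ Z'.card ≤ N ∧ ∀ A ∈ Z', ZoneConnected G A)) := by
  have isPartition (Z' : Finset (Finset V)) : IsZonePartition (refinedPartition G Z') :=
    isZonePartition_reachableClasses _
  have connected (Z' : Finset (Finset V)) : ∀ A ∈ refinedPartition G Z', ZoneConnected G A :=
    fun _ => zoneConnected_of_mem_reachableClasses _ restrictedGraph_le
  have sameObj {Z'} (hZ' : IsZonePartition Z') (P : ℕ → ℝ) :
      zoneObj D r t Wd sigmaM (refinedPartition G Z') P = zoneObj D r t Wd sigmaM Z' P :=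
    Finset.sum_congr rfl fun d hd => by rw [hZ'.sigmaM_refinedPartition (hW d hd).1]
  refine ⟨⟨hZ.card_le_card_of_refines (isPartition Z) hZ.refinedPartition_refines,
      card_reachableClasses_le _, isPartition Z, connected Z, hZ.refinedPartition_refines⟩,
    fun W hW => hZ.sigmaM_refinedPartition hW, sameObj hZ, ?_⟩
  rintro rfl
  exact zStar_eq_of_forall_exists (fun _ h => ⟨h.1, h.2.1⟩) fun Z' ⟨hZ', _⟩ =>
    ⟨refinedPartition G Z', ⟨isPartition Z', card_reachableClasses_le _, connected Z'⟩,
      sameObj hZ'⟩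

/-- Splitting each zone of a zone partition into the connected components of its induced
subgraph yields a zone partition with connected zones, with at least as many and at most
`|V|` zones, refining the original one, and leaving the multiple-counting zone function of
every path — hence the objective value for every price function — unchanged.  In
particular, for `N = |V|` the optimal values with arbitrary and with connected zones
coincide for multiple counting. -/
theorem refined_partition_preserves_multiple_counting {V ι : Type*} [Fintype V] [Nonempty V]
    (G : SimpleGraph V) (hG : G.Connected)
    (Z : Finset (Finset V)) (hZ : IsZonePartition Z)
    (D : Finset ι) (r : ι → ℝ) (t : ι → ℕ) (Wd : ι → List V)
    (hr : ∀ d ∈ D, 0 ≤ r d) (ht : ∀ d ∈ D, 1 ≤ t d)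
    (hW : ∀ d ∈ D, (Wd d).Chain' G.Adj ∧ Wd d ≠ [])
    (N : ℕ) (hN : 1 ≤ N) :
    (Z.card ≤ (refinedPartition G Z).card ∧
      (refinedPartition G Z).card ≤ Fintype.card V ∧
      IsZonePartition (refinedPartition G Z) ∧
      (∀ A ∈ refinedPartition G Z, ZoneConnected G A) ∧
      ∀ A ∈ refinedPartition G Z, ∃ B ∈ Z, A ⊆ B) ∧
    (∀ W : List V, W.Chain' G.Adj → sigmaM (refinedPartition G Z) W = sigmaM Z W) ∧
    (∀ P : ℕ → ℝ,
      zoneObj D r t Wd sigmaM (refinedPartition G Z) P = zoneObj D r t Wd sigmaM Z P) ∧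
    (N = Fintype.card V →
      zStar D r t Wd sigmaM (fun Z' => IsZonePartition Z' ∧ Z'.card ≤ N) =
        zStar D r t Wd sigmaM
          (fun Z' => IsZonePartition Z' ∧ Z'.card ≤ N ∧ ∀ A ∈ Z', ZoneConnected G A)) :=
  refined_partition_preserves_multiple_counting_general G Z hZ D r t Wd hW N

end
end

section
/- Let (p*_1,…,p*_κ) be an optimal solution to the monotone price-setting subproblem (minimize ∑_{k=1}^{κ} ∑_{d∈D_k} t_d |r_d − p_k| subject to 0 ≤ p_1 ≤ … ≤ p_κ). If the prices are strictly increasing, p*_1 < p*_2 < … < p*_κ, then for every k ∈ {1,…,κ} with D_k ≠ ∅, p*_k is a weighted median of (r_d)_{d∈D_k} with weights (t_d)_{d∈D_k}. -/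
open scoped Classical

/-- `p` is a weighted median of the values `r d` with weights `t d` over `d ∈ D`. -/
def IsWeightedMedian {ι : Type*} (D : Finset ι) (r : ι → ℝ) (t : ι → ℕ) (p : ℝ) : Prop :=
  (∑ d ∈ D.filter (fun d => r d < p), (t d : ℝ)) ≤ (∑ d ∈ D, (t d : ℝ)) / 2 ∧
    (∑ d ∈ D.filter (fun d => p < r d), (t d : ℝ)) ≤ (∑ d ∈ D, (t d : ℝ)) / 2

/-- Objective of the price-setting subproblem. -/
noncomputable def psObj {ι : Type*} (κ : ℕ) (Dk : Fin κ → Finset ι) (r : ι → ℝ)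
    (t : ι → ℕ) (p : Fin κ → ℝ) : ℝ :=
  ∑ k : Fin κ, ∑ d ∈ Dk k, (t d : ℝ) * |r d - p k|

/-!
A strictly increasing optimal price list can be perturbed in a single coordinate `k`, up or
down by a small `ε > 0`, without leaving the feasible set, so `p k` minimizes the weighted
absolute deviation `f x = ∑_{d ∈ D_k} t_d |r_d - x|` against such moves. For small `ε`,
`f (x + ε) - f x = ε (W_{r ≤ x} - W_{r > x})`, so a one-sided minimum to the right forces the
weight above `x` to be at most half the total; the other half of the median condition follows
by reflecting `r` and `x`. Only downward moves at `p k = 0` are infeasible, and there the weight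
below `p k` vanishes because the reference prices are nonnegative.
-/

open Filter Topology Function

noncomputable def weightedAbsDev {ι : Type*} (D : Finset ι) (r : ι → ℝ) (t : ι → ℕ)
    (x : ℝ) : ℝ :=
  ∑ d ∈ D, (t d : ℝ) * |r d - x|

lemma eventually_abs_sub_add_eq (a x : ℝ) :
    ∀ᶠ ε in 𝓝[>] (0 : ℝ), |a - (x + ε)| = |a - x| + if x < a then -ε else ε := by
  by_cases h : x < a
  · filter_upwards [(eventually_lt_nhds (sub_pos.2 h)).filter_mono nhdsWithin_le_nhds]
      with ε hε
    rw [if_pos h, abs_of_pos (by linarith), abs_of_pos (by linarith)]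
    ring
  · filter_upwards [self_mem_nhdsWithin] with ε (hε : 0 < ε)
    rw [if_neg h, abs_of_neg (by linarith), abs_of_nonpos (by linarith)]
    ring

section WeightedAbsDev

variable {ι : Type*} (D : Finset ι) (r : ι → ℝ) (t : ι → ℕ)

lemma eventually_weightedAbsDev_add_eq (x : ℝ) :
    ∀ᶠ ε in 𝓝[>] (0 : ℝ), weightedAbsDev D r t (x + ε) = weightedAbsDev D r t x +
      ε * (∑ d ∈ D.filter (fun d => ¬ x < r d), (t d : ℝ) -
        ∑ d ∈ D.filter (fun d => x < r d), (t d : ℝ)) := by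
  filter_upwards [(eventually_all_finset D).2 fun d _ => eventually_abs_sub_add_eq (r d) x]
    with ε hε
  have hsplit : ∀ d ∈ D, (t d : ℝ) * |r d - (x + ε)| = (t d : ℝ) * |r d - x| +
      ε * if x < r d then -(t d : ℝ) else (t d : ℝ) := by
    intro d hd
    rw [hε d hd]
    split_ifs <;> ring
  rw [weightedAbsDev, Finset.sum_congr rfl hsplit, Finset.sum_add_distrib, ← Finset.mul_sum,
    Finset.sum_ite, Finset.sum_neg_distrib, weightedAbsDev]
  ring

lemma weightedAbsDev_neg (x : ℝ) : weightedAbsDev D (-r) t (-x) = weightedAbsDev D r t x := by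
  simp only [weightedAbsDev, Pi.neg_apply, neg_sub_neg, abs_sub_comm]

lemma weight_above_le_half_of_eventually_le_add {x : ℝ}
    (hmin : ∀ᶠ ε in 𝓝[>] (0 : ℝ), weightedAbsDev D r t x ≤ weightedAbsDev D r t (x + ε)) :
    ∑ d ∈ D.filter (fun d => x < r d), (t d : ℝ) ≤ (∑ d ∈ D, (t d : ℝ)) / 2 := by
  obtain ⟨ε, ⟨hle, heq⟩, hε⟩ :=
    ((hmin.and (eventually_weightedAbsDev_add_eq D r t x)).and self_mem_nhdsWithin).exists
  have hε : (0 : ℝ) < ε := hε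
  have htotal := Finset.sum_filter_add_sum_filter_not D (fun d => x < r d) (fun d => (t d : ℝ))
  have hbalance : ∑ d ∈ D.filter (fun d => x < r d), (t d : ℝ) ≤
      ∑ d ∈ D.filter (fun d => ¬ x < r d), (t d : ℝ) := by
    have := heq ▸ hle
    nlinarith
  linarith

lemma weight_below_le_half_of_eventually_le_sub {x : ℝ}
    (hmin : ∀ᶠ ε in 𝓝[>] (0 : ℝ), weightedAbsDev D r t x ≤ weightedAbsDev D r t (x - ε)) :
    ∑ d ∈ D.filter (fun d => r d < x), (t d : ℝ) ≤ (∑ d ∈ D, (t d : ℝ)) / 2 := by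
  have hreflect : ∀ᶠ ε in 𝓝[>] (0 : ℝ),
      weightedAbsDev D (-r) t (-x) ≤ weightedAbsDev D (-r) t (-x + ε) := by
    filter_upwards [hmin] with ε hε
    rwa [show -x + ε = -(x - ε) by ring, weightedAbsDev_neg, weightedAbsDev_neg]
  simpa only [Pi.neg_apply, neg_lt_neg_iff] using
    weight_above_le_half_of_eventually_le_add D (-r) t hreflect

end WeightedAbsDev

lemma monotone_update_of_le_of_le {α β : Type*} [LinearOrder α] [Preorder β] [DecidableEq α]
    {p : α → β} (hp : Monotone p) {k : α} {y : β} (hlt : ∀ j < k, p j ≤ y)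
    (hgt : ∀ j, k < j → y ≤ p j) : Monotone (update p k y) := by
  intro i j hij
  simp only [update_apply]
  split_ifs with hi hj hj
  · exact le_rfl
  · exact hgt j (lt_of_le_of_ne (hi ▸ hij) (Ne.symm (hi ▸ hj)))
  · exact hlt i (lt_of_le_of_ne (hj ▸ hij) hi)
  · exact hp hij

lemma StrictMono.eventually_monotone_update {α : Type*} [LinearOrder α] [Finite α]
    [DecidableEq α] {p : α → ℝ} (hp : StrictMono p) (k : α) :
    ∀ᶠ δ in 𝓝 (0 : ℝ), Monotone (update p k (p k + δ)) := by
  have hlt : ∀ᶠ δ in 𝓝 (0 : ℝ), ∀ j < k, p j ≤ p k + δ := by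
    refine eventually_all.2 fun j => ?_
    by_cases hjk : j < k
    · filter_upwards [eventually_gt_nhds (sub_neg.2 (hp hjk))] with δ hδ _
      linarith
    · exact Eventually.of_forall fun _ h => absurd h hjk
  have hgt : ∀ᶠ δ in 𝓝 (0 : ℝ), ∀ j, k < j → p k + δ ≤ p j := by
    refine eventually_all.2 fun j => ?_
    by_cases hkj : k < j
    · filter_upwards [eventually_lt_nhds (sub_pos.2 (hp hkj))] with δ hδ _
      linarith
    · exact Eventually.of_forall fun _ h => absurd h hkj
  filter_upwards [hlt, hgt] with δ hδlt hδgt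
  exact monotone_update_of_le_of_le hp.monotone hδlt hδgt

lemma weightedAbsDev_le_of_psObj_le_update {ι : Type*} {κ : ℕ} {Dk : Fin κ → Finset ι}
    {r : ι → ℝ} {t : ι → ℕ} {p : Fin κ → ℝ} {k : Fin κ} {y : ℝ}
    (h : psObj κ Dk r t p ≤ psObj κ Dk r t (update p k y)) :
    weightedAbsDev (Dk k) r t (p k) ≤ weightedAbsDev (Dk k) r t y := by
  have hrest : ∑ j ∈ Finset.univ.erase k, weightedAbsDev (Dk j) r t (update p k y j) =
      ∑ j ∈ Finset.univ.erase k, weightedAbsDev (Dk j) r t (p j) :=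
    Finset.sum_congr rfl fun j hj => by rw [update_of_ne (Finset.ne_of_mem_erase hj)]
  change ∑ j, weightedAbsDev (Dk j) r t (p j) ≤
    ∑ j, weightedAbsDev (Dk j) r t (update p k y j) at h
  rw [← Finset.add_sum_erase _ _ (Finset.mem_univ k),
    ← Finset.add_sum_erase _ _ (Finset.mem_univ k), hrest, update_self] at h
  linarith

theorem monotone_price_setting_strict_implies_weighted_medians_general {ι : Type*} (κ : ℕ)
    (Dk : Fin κ → Finset ι) (r : ι → ℝ) (t : ι → ℕ)
    (hr : ∀ k, ∀ d ∈ Dk k, 0 ≤ r d)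
    (p : Fin κ → ℝ) (hp0 : ∀ k, 0 ≤ p k)
    (hopt : ∀ q : Fin κ → ℝ, (∀ k, 0 ≤ q k) → Monotone q →
      psObj κ Dk r t p ≤ psObj κ Dk r t q)
    (hstrict : StrictMono p) :
    ∀ k, (Dk k).Nonempty → IsWeightedMedian (Dk k) r t (p k) := by
  intro k _
  have hlocal : ∀ δ, 0 ≤ p k + δ → Monotone (update p k (p k + δ)) →
      weightedAbsDev (Dk k) r t (p k) ≤ weightedAbsDev (Dk k) r t (p k + δ) :=
    fun δ hδ hmono => weightedAbsDev_le_of_psObj_le_update <|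
      hopt _ (fun j => (le_update_iff.2 ⟨hδ, fun j _ => hp0 j⟩ : 0 ≤ update p k _) j) hmono
  have hmono := hstrict.eventually_monotone_update k
  refine ⟨?_, weight_above_le_half_of_eventually_le_add _ _ _ ?_⟩
  · rcases (hp0 k).eq_or_lt with hzero | hpos
    · rw [Finset.filter_eq_empty_iff.2 fun d hd => (hzero ▸ hr k d hd).not_gt,
        Finset.sum_empty]
      exact div_nonneg (Finset.sum_nonneg fun d _ => Nat.cast_nonneg _) zero_le_two
    · refine weight_below_le_half_of_eventually_le_sub _ _ _ ?_
      filter_upwards [((continuous_neg.tendsto' 0 0 neg_zero).mono_left nhdsWithin_le_nhds).eventually hmono,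
        (eventually_lt_nhds hpos).filter_mono nhdsWithin_le_nhds] with ε hεmono hεpos
      rw [sub_eq_add_neg]
      exact hlocal _ (by linarith) hεmono
  · filter_upwards [hmono.filter_mono nhdsWithin_le_nhds, self_mem_nhdsWithin]
      with ε hεmono (hεpos : 0 < ε)
    exact hlocal _ (by linarith [hp0 k]) hεmono

/-- If an optimal solution to the monotone price-setting subproblem has strictly
increasing prices, then each price at a nonempty level is a weighted median of the
reference prices of that level. -/
theorem monotone_price_setting_strict_implies_weighted_medians {ι : Type*} (κ : ℕ)
    (Dk : Fin κ → Finset ι) (r : ι → ℝ) (t : ι → ℕ)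
    (hr : ∀ k, ∀ d ∈ Dk k, 0 ≤ r d) (ht : ∀ k, ∀ d ∈ Dk k, 1 ≤ t d)
    (hdisj : ∀ k k' : Fin κ, k ≠ k' → Disjoint (Dk k) (Dk k'))
    (p : Fin κ → ℝ) (hp0 : ∀ k, 0 ≤ p k)
    (hopt : ∀ q : Fin κ → ℝ, (∀ k, 0 ≤ q k) → Monotone q →
      psObj κ Dk r t p ≤ psObj κ Dk r t q)
    (hstrict : StrictMono p) :
    ∀ k, (Dk k).Nonempty → IsWeightedMedian (Dk k) r t (p k) :=
  monotone_price_setting_strict_implies_weighted_medians_general κ Dk r t hr p hp0 hopt hstrict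
end

section
/- Let (p'_1,…,p'_κ) be an optimal solution to the unrestricted price-setting subproblem (minimize ∑_{k=1}^{κ} ∑_{d∈D_k} t_d |r_d − p_k| over p_k ≥ 0, without monotonicity). If p'_k > p'_{k+1} for some k ∈ {1,…,κ−1}, then there exists an optimal solution (p*_1,…,p*_κ) to the monotone price-setting subproblem (with the additional constraints 0 ≤ p*_1 ≤ … ≤ p*_κ) satisfying p*_k = p*_{k+1}. -/
/-!
The objective is separable, `psObj p = ∑ k, blockCost (Dk k) (p k)`, with convex block costs.
Take any optimal monotone `P` (it exists by compactness, after truncating prices at an upper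
bound of the reference prices). Since `p'` is unrestricted-optimal, `p' k` and `p' (k + 1)`
minimise their block costs over `[0, ∞)`, and `p' (k + 1) ≤ p' k`. Clamping `p' (k + 1)` into
`[P k, P (k + 1)]` gives a price `c` which lies between `P k` and `p' k` and between
`p' (k + 1)` and `P (k + 1)`; so moving both prices to `c` keeps `P` monotone and, by convexity,
increases neither block cost.
-/

open scoped Classical

open Set

section BlockCost

variable {ι : Type*}

noncomputable def blockCost (D : Finset ι) (r : ι → ℝ) (t : ι → ℕ) (x : ℝ) : ℝ :=
  ∑ d ∈ D, (t d : ℝ) * |r d - x|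

theorem psObj_eq_sum_blockCost (κ : ℕ) (Dk : Fin κ → Finset ι) (r : ι → ℝ) (t : ι → ℕ)
    (p : Fin κ → ℝ) : psObj κ Dk r t p = ∑ k, blockCost (Dk k) r t (p k) :=
  rfl

theorem convexOn_blockCost (D : Finset ι) (r : ι → ℝ) (t : ι → ℕ) :
    ConvexOn ℝ univ (blockCost D r t) := by
  have h : blockCost D r t = ∑ d ∈ D, fun x => (t d : ℝ) • dist x (r d) := by
    ext x
    simp [blockCost, Finset.sum_apply, Real.dist_eq, abs_sub_comm]
  rw [h]
  exact Finset.sum_induction _ (ConvexOn ℝ univ) (fun _ _ => ConvexOn.add)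
    (convexOn_const 0 convex_univ) fun d _ => (convexOn_univ_dist (r d)).smul (by positivity)

theorem blockCost_min_le {D : Finset ι} {r : ι → ℝ} (t : ι → ℕ) {M : ℝ}
    (hM : ∀ d ∈ D, r d ≤ M) (x : ℝ) : blockCost D r t (min x M) ≤ blockCost D r t x :=
  Finset.sum_le_sum fun d hd => mul_le_mul_of_nonneg_left
    (by simpa [min_eq_left (hM d hd)] using abs_min_sub_min_le_max (r d) M x M)
    (Nat.cast_nonneg _)

theorem continuous_psObj (κ : ℕ) (Dk : Fin κ → Finset ι) (r : ι → ℝ) (t : ι → ℕ) :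
    Continuous (psObj κ Dk r t) := by
  unfold psObj
  fun_prop

end BlockCost

theorem apply_le_of_forall_sum_le {α γ : Type*} [Fintype α] [DecidableEq α]
    (f : α → γ → ℝ) {s : Set γ} {p : α → γ}
    (hp : ∀ q : α → γ, (∀ i, q i ∈ s) → ∑ i, f i (p i) ≤ ∑ i, f i (q i))
    (hps : ∀ i, p i ∈ s) (j : α) {x : γ} (hx : x ∈ s) : f j (p j) ≤ f j x := by
  have h := hp (Function.update p j x) fun i => by
    rcases eq_or_ne i j with rfl | hi
    · simpa using hx
    · simpa [hi] using hps i
  simp only [Function.apply_update f p j x, Finset.sum_update_of_mem (Finset.mem_univ j)] at h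
  rw [← Finset.add_sum_erase _ _ (Finset.mem_univ j), Finset.sdiff_singleton_eq_erase] at h
  linarith

theorem ConvexOn.le_right_of_mem_uIcc {𝕜 : Type*} [Field 𝕜] [LinearOrder 𝕜]
    [IsStrictOrderedRing 𝕜] {s : Set 𝕜} {f : 𝕜 → 𝕜} (hf : ConvexOn 𝕜 s f) {x y z : 𝕜}
    (hx : x ∈ s) (hy : y ∈ s)
    (hxy : f x ≤ f y) (hz : z ∈ uIcc x y) : f z ≤ f y :=
  (hf.le_on_segment hx hy (segment_eq_uIcc x y ▸ hz)).trans (max_le hxy le_rfl)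

theorem exists_mem_Icc_convex_le {f g : ℝ → ℝ} (hf : ConvexOn ℝ univ f)
    (hg : ConvexOn ℝ univ g) {a b m₀ m₁ : ℝ} (hab : a ≤ b) (hm : m₁ ≤ m₀)
    (hfa : f m₀ ≤ f a) (hgb : g m₁ ≤ g b) : ∃ c ∈ Icc a b, f c ≤ f a ∧ g c ≤ g b := by
  refine ⟨max a (min b m₁), ⟨le_max_left _ _, max_le hab (min_le_left _ _)⟩,
    hf.le_right_of_mem_uIcc trivial trivial hfa ?_, hg.le_right_of_mem_uIcc trivial trivial hgb ?_⟩
  all_goals grind [mem_uIcc]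

theorem Monotone.ite_mem_Icc {α β : Type*} [LinearOrder α] [Preorder β] {f : α → β}
    (hf : Monotone f) {i j : α} {c : β} (hi : f i ≤ c) (hj : c ≤ f j) :
    Monotone fun x => if x ∈ Icc i j then c else f x := by
  intro x y hxy
  dsimp only
  split_ifs with hx hy hy
  · exact le_rfl
  · exact hj.trans (hf (not_le.1 fun h => hy ⟨hx.1.trans hxy, h⟩).le)
  · exact (hf (not_le.1 fun h => hx ⟨h, hxy.trans hy.2⟩).le).trans hi
  · exact hf hxy

theorem exists_monotone_nonneg_psObj_le {ι : Type*} (κ : ℕ) (Dk : Fin κ → Finset ι)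
    (r : ι → ℝ) (t : ι → ℕ) :
    ∃ P : Fin κ → ℝ, (∀ j, 0 ≤ P j) ∧ Monotone P ∧
      ∀ q : Fin κ → ℝ, (∀ j, 0 ≤ q j) → Monotone q → psObj κ Dk r t P ≤ psObj κ Dk r t q := by
  obtain ⟨M, hM0, hrM⟩ : ∃ M : ℝ, 0 ≤ M ∧ ∀ j, ∀ d ∈ Dk j, r d ≤ M :=
    ⟨∑ d ∈ Finset.univ.biUnion Dk, |r d|, Finset.sum_nonneg fun _ _ => abs_nonneg _,
      fun j d hd => (le_abs_self _).trans <|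
        Finset.single_le_sum (f := fun d => |r d|) (fun _ _ => abs_nonneg _)
        (Finset.mem_biUnion.2 ⟨j, Finset.mem_univ j, hd⟩)⟩
  have hS : IsCompact ({q : Fin κ → ℝ | Monotone q} ∩ univ.pi fun _ => Icc 0 M) :=
    (isCompact_univ_pi fun _ => isCompact_Icc).inter_left isClosed_monotone
  obtain ⟨P, ⟨hPmono, hPIcc⟩, hPmin⟩ := hS.exists_isMinOn
    ⟨0, monotone_const, fun _ _ => ⟨le_rfl, hM0⟩⟩ (continuous_psObj κ Dk r t).continuousOn
  refine ⟨P, fun j => (hPIcc j trivial).1, hPmono, fun q hq0 hqmono => ?_⟩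
  calc psObj κ Dk r t P ≤ psObj κ Dk r t fun j => min (q j) M :=
        hPmin ⟨fun _ _ hij => min_le_min_right M (hqmono hij),
          fun j _ => ⟨le_min (hq0 j) hM0, min_le_right _ _⟩⟩
    _ ≤ psObj κ Dk r t q := Finset.sum_le_sum fun j _ => blockCost_min_le t (hrM j) (q j)

theorem monotone_optimal_solution_with_equality_general {ι : Type*} (κ : ℕ)
    (Dk : Fin κ → Finset ι) (r : ι → ℝ) (t : ι → ℕ)
    (p' : Fin κ → ℝ) (hp'0 : ∀ k, 0 ≤ p' k)
    (hopt' : ∀ q : Fin κ → ℝ, (∀ k, 0 ≤ q k) → psObj κ Dk r t p' ≤ psObj κ Dk r t q)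
    (k : ℕ) (hk : k + 1 < κ)
    (hdec : p' ⟨k + 1, hk⟩ < p' ⟨k, Nat.lt_of_succ_lt hk⟩) :
    ∃ p : Fin κ → ℝ, (∀ j, 0 ≤ p j) ∧ Monotone p ∧
      (∀ q : Fin κ → ℝ, (∀ j, 0 ≤ q j) → Monotone q →
        psObj κ Dk r t p ≤ psObj κ Dk r t q) ∧
      p ⟨k, Nat.lt_of_succ_lt hk⟩ = p ⟨k + 1, hk⟩ := by
  set k₀ : Fin κ := ⟨k, Nat.lt_of_succ_lt hk⟩
  set k₁ : Fin κ := ⟨k + 1, hk⟩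
  obtain ⟨P, hP0, hPmono, hPopt⟩ := exists_monotone_nonneg_psObj_le κ Dk r t
  have hmin (j : Fin κ) {x : ℝ} (hx : 0 ≤ x) :
      blockCost (Dk j) r t (p' j) ≤ blockCost (Dk j) r t x :=
    apply_le_of_forall_sum_le (fun j => blockCost (Dk j) r t) (s := Ici 0) hopt' hp'0 j hx
  obtain ⟨c, hc, hc₀, hc₁⟩ := exists_mem_Icc_convex_le (convexOn_blockCost (Dk k₀) r t)
    (convexOn_blockCost (Dk k₁) r t) (hPmono (Fin.le_def.2 k.le_succ)) hdec.le
    (hmin k₀ (hP0 k₀)) (hmin k₁ (hP0 k₁))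
  have hIcc (j : Fin κ) : j ∈ Icc k₀ k₁ ↔ j = k₀ ∨ j = k₁ := by
    simp only [mem_Icc, Fin.le_def, Fin.ext_iff, k₀, k₁]
    omega
  refine ⟨fun j => if j ∈ Icc k₀ k₁ then c else P j, fun j => ?_, hPmono.ite_mem_Icc hc.1 hc.2,
    fun q hq0 hqmono => le_trans ?_ (hPopt q hq0 hqmono), ?_⟩
  · dsimp only
    split_ifs
    exacts [(hP0 k₀).trans hc.1, hP0 j]
  · rw [psObj_eq_sum_blockCost, psObj_eq_sum_blockCost]
    refine Finset.sum_le_sum fun j _ => ?_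
    split_ifs with hj
    · rcases (hIcc j).1 hj with rfl | rfl
      exacts [hc₀, hc₁]
    · exact le_rfl
  · simp only [(hIcc k₀).2 (Or.inl rfl), (hIcc k₁).2 (Or.inr rfl), if_true]

/-- If an optimal solution to the unrestricted price-setting subproblem has two
consecutive prices in decreasing order, then there is an optimal solution to the monotone
price-setting subproblem in which these two prices are equal. -/
theorem monotone_optimal_solution_with_equality {ι : Type*} (κ : ℕ)
    (Dk : Fin κ → Finset ι) (r : ι → ℝ) (t : ι → ℕ)
    (hr : ∀ k, ∀ d ∈ Dk k, 0 ≤ r d) (ht : ∀ k, ∀ d ∈ Dk k, 1 ≤ t d)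
    (hdisj : ∀ k k' : Fin κ, k ≠ k' → Disjoint (Dk k) (Dk k'))
    (p' : Fin κ → ℝ) (hp'0 : ∀ k, 0 ≤ p' k)
    (hopt' : ∀ q : Fin κ → ℝ, (∀ k, 0 ≤ q k) → psObj κ Dk r t p' ≤ psObj κ Dk r t q)
    (k : ℕ) (hk : k + 1 < κ)
    (hdec : p' ⟨k + 1, hk⟩ < p' ⟨k, Nat.lt_of_succ_lt hk⟩) :
    ∃ p : Fin κ → ℝ, (∀ j, 0 ≤ p j) ∧ Monotone p ∧
      (∀ q : Fin κ → ℝ, (∀ j, 0 ≤ q j) → Monotone q →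
        psObj κ Dk r t p ≤ psObj κ Dk r t q) ∧
      p ⟨k, Nat.lt_of_succ_lt hk⟩ = p ⟨k + 1, hk⟩ :=
  monotone_optimal_solution_with_equality_general κ Dk r t p' hp'0 hopt' k hk hdec
end

section
/- Let G = (V,E) be a PTN with a zone partition 𝒵 and a price function P : ℕ≥1 → ℝ≥0 satisfying P(k) ≤ P(i) + P(k − i + 1) for all k ∈ ℕ≥1 and i ∈ {1,…,k}. Then the zone tariff with multiple counting π(W) = P(σ_M(W)) satisfies the no-stopover property: for every path (v_1,…,v_n) with n ≥ 3 and every intermediate index i ∈ {2,…,n−1}, π((v_1,…,v_n)) ≤ π((v_1,…,v_i)) + π((v_i,…,v_n)). -/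
open scoped Classical

noncomputable section

/-! The two halves of a path split at `v_i` overlap only in `v_i`, so together they cross exactly
the zone borders of the whole path: `σ_M(W) + 1 = σ_M(W₁) + σ_M(W₂)`. The hypothesis on `P`, taken
at `k = σ_M(W)` and `i = σ_M(W₁)`, is then precisely the no-stopover inequality. -/

theorem List.zip_tail_take_succ_append_zip_tail_drop {α : Type*} (l : List α) (i : ℕ) :
    (l.take (i + 1)).zip (l.take (i + 1)).tail ++ (l.drop i).zip (l.drop i).tail =
      l.zip l.tail := by
  induction l generalizing i with
  | nil => simp
  | cons a t ih =>
    cases i with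
    | zero => simp
    | succ i =>
      cases t with
      | nil => simp
      | cons b t => simpa using ih i

theorem one_le_sigmaM {V : Type*} (Z : Finset (Finset V)) (W : List V) : 1 ≤ sigmaM Z W :=
  Nat.le_add_right 1 _

theorem sigmaM_take_add_sigmaM_drop {V : Type*} (Z : Finset (Finset V)) (W : List V) (i : ℕ) :
    sigmaM Z (W.take (i + 1)) + sigmaM Z (W.drop i) = sigmaM Z W + 1 := by
  simp only [sigmaM, ← W.zip_tail_take_succ_append_zip_tail_drop i, List.filter_append,
    List.length_append]
  omega

theorem price_le_add_of_add_eq_add_one {P : ℕ → ℝ}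
    (hsub : ∀ k : ℕ, 1 ≤ k → ∀ i : ℕ, 1 ≤ i → i ≤ k → P k ≤ P i + P (k - i + 1))
    {a b k : ℕ} (ha : 1 ≤ a) (hb : 1 ≤ b) (hk : a + b = k + 1) : P k ≤ P a + P b := by
  have := hsub k (by omega) a ha (by omega)
  rwa [show k - a + 1 = b by omega] at this

theorem subadditive_prices_imply_no_stopover_multiple_general {V : Type*} (G : SimpleGraph V)
    (Z : Finset (Finset V))
    (P : ℕ → ℝ)
    (hsub : ∀ k : ℕ, 1 ≤ k → ∀ i : ℕ, 1 ≤ i → i ≤ k → P k ≤ P i + P (k - i + 1)) :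
    ∀ W : List V, W.Chain' G.Adj → ∀ i : ℕ, 2 ≤ i → i ≤ W.length - 1 →
      P (sigmaM Z W) ≤ P (sigmaM Z (W.take i)) + P (sigmaM Z (W.drop (i - 1))) := by
  intro W _ i hi _
  obtain ⟨j, rfl⟩ : ∃ j, i = j + 1 := ⟨i - 1, by omega⟩
  rw [Nat.add_sub_cancel]
  exact price_le_add_of_add_eq_add_one hsub (one_le_sigmaM Z _) (one_le_sigmaM Z _)
    (sigmaM_take_add_sigmaM_drop Z W j)

/-- If the price function satisfies P(k) ≤ P(i) + P(k - i + 1) for all k ≥ 1 and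
1 ≤ i ≤ k, then the zone tariff with multiple counting satisfies the no-stopover
property: splitting a path (v_1, …, v_n), n ≥ 3, at an intermediate station v_i
(2 ≤ i ≤ n - 1, one-based) never decreases the total fare. -/
theorem subadditive_prices_imply_no_stopover_multiple {V : Type*} (G : SimpleGraph V)
    (Z : Finset (Finset V)) (hZ : IsZonePartition Z)
    (P : ℕ → ℝ) (hP0 : ∀ k, 0 ≤ P k)
    (hsub : ∀ k : ℕ, 1 ≤ k → ∀ i : ℕ, 1 ≤ i → i ≤ k → P k ≤ P i + P (k - i + 1)) :
    ∀ W : List V, W.Chain' G.Adj → ∀ i : ℕ, 2 ≤ i → i ≤ W.length - 1 →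
      P (sigmaM Z W) ≤ P (sigmaM Z (W.take i)) + P (sigmaM Z (W.drop (i - 1))) :=
  subadditive_prices_imply_no_stopover_multiple_general G Z P hsub

end
end

section
/- Let G = (V,E) be a PTN with a zone partition 𝒵 and a price function P : ℕ≥1 → ℝ≥0 satisfying P(k) ≤ P(i₁) + P(i₂) for all k ∈ ℕ≥1 and all i₁, i₂ ∈ {1,…,k} with i₁ + i₂ ≥ k + 1. Then the zone tariff with single counting π(W) = P(σ_S(W)) satisfies the no-stopover property: for every path (v_1,…,v_n) with n ≥ 3 and every intermediate index i ∈ {2,…,n−1}, π((v_1,…,v_n)) ≤ π((v_1,…,v_i)) + π((v_i,…,v_n)). -/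
open scoped Classical

noncomputable section

/-! The two legs of a split path share the transfer station, so together they meet every zone
of the whole path and meet the transfer station's zone twice. Hence their zone counts `i₁, i₂`
satisfy `i₁ + i₂ ≥ k + 1` and `i₁, i₂ ≤ k`, where `k` is the zone count of the whole path,
which is exactly the case covered by the hypothesis on the price function. -/

def zonesMet {V : Type*} (Z : Finset (Finset V)) (W : List V) : Finset (Finset V) :=
  Z.filter (fun A => ∃ v ∈ W, v ∈ A)

def IsSubadditivePrice {M : Type*} [Add M] [LE M] (P : ℕ → M) : Prop :=
  ∀ k : ℕ, 1 ≤ k → ∀ i₁ i₂ : ℕ, 1 ≤ i₁ → i₁ ≤ k → 1 ≤ i₂ → i₂ ≤ k →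
    k + 1 ≤ i₁ + i₂ → P k ≤ P i₁ + P i₂

theorem List.subset_take_append_drop {α : Type*} (W : List α) {i j : ℕ} (hji : j ≤ i) :
    W ⊆ W.take i ++ W.drop j := by
  conv_lhs => rw [← List.take_append_drop j W]
  exact List.append_subset.2
    ⟨List.Subset.trans (List.take_subset_take_left W hji) (List.subset_append_left _ _),
      List.subset_append_right _ _⟩

section ZoneCount

variable {V : Type*} {Z : Finset (Finset V)}

theorem mem_zonesMet {A : Finset V} {W : List V} : A ∈ zonesMet Z W ↔ A ∈ Z ∧ ∃ v ∈ W, v ∈ A :=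
  Finset.mem_filter

theorem zonesMet_mono {W W' : List V} (h : W ⊆ W') : zonesMet Z W ⊆ zonesMet Z W' :=
  Finset.monotone_filter_right _ fun _ _ ⟨v, hv, hvA⟩ => ⟨v, h hv, hvA⟩

theorem zonesMet_append (W W' : List V) :
    zonesMet Z (W ++ W') = zonesMet Z W ∪ zonesMet Z W' := by
  simp only [zonesMet, List.mem_append, or_and_right, exists_or, Finset.filter_or]

theorem sigmaS_mono {W W' : List V} (h : W ⊆ W') : sigmaS Z W ≤ sigmaS Z W' :=
  Finset.card_le_card (zonesMet_mono h)

theorem one_le_sigmaS (hcov : ∀ v : V, ∃ A ∈ Z, v ∈ A) {W : List V} {x : V} (hx : x ∈ W) :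
    1 ≤ sigmaS Z W := by
  obtain ⟨A, hA, hxA⟩ := hcov x
  exact Finset.card_pos.2 ⟨A, mem_zonesMet.2 ⟨hA, x, hx, hxA⟩⟩

theorem sigmaS_add_one_le_of_mem_of_mem (hcov : ∀ v : V, ∃ A ∈ Z, v ∈ A) {W L₁ L₂ : List V}
    (hW : W ⊆ L₁ ++ L₂) {x : V} (hx₁ : x ∈ L₁) (hx₂ : x ∈ L₂) :
    sigmaS Z W + 1 ≤ sigmaS Z L₁ + sigmaS Z L₂ := by
  obtain ⟨A, hA, hxA⟩ := hcov x
  have hcover : zonesMet Z W ⊆ zonesMet Z L₁ ∪ zonesMet Z L₂ :=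
    zonesMet_append L₁ L₂ ▸ zonesMet_mono hW
  have hshared : A ∈ zonesMet Z L₁ ∩ zonesMet Z L₂ :=
    Finset.mem_inter.2 ⟨mem_zonesMet.2 ⟨hA, x, hx₁, hxA⟩, mem_zonesMet.2 ⟨hA, x, hx₂, hxA⟩⟩
  calc sigmaS Z W + 1
      ≤ (zonesMet Z L₁ ∪ zonesMet Z L₂).card + (zonesMet Z L₁ ∩ zonesMet Z L₂).card :=
        add_le_add (Finset.card_le_card hcover) (Finset.card_pos.2 ⟨A, hshared⟩)
    _ = sigmaS Z L₁ + sigmaS Z L₂ := Finset.card_union_add_card_inter _ _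

theorem price_sigmaS_le_add_of_overlap {M : Type*} [Add M] [LE M] {P : ℕ → M}
    (hP : IsSubadditivePrice P) (hcov : ∀ v : V, ∃ A ∈ Z, v ∈ A) {W L₁ L₂ : List V}
    (hW : W ⊆ L₁ ++ L₂) (hL₁ : L₁ ⊆ W) (hL₂ : L₂ ⊆ W) {x : V} (hx₁ : x ∈ L₁) (hx₂ : x ∈ L₂) :
    P (sigmaS Z W) ≤ P (sigmaS Z L₁) + P (sigmaS Z L₂) :=
  hP _ (one_le_sigmaS hcov (hL₁ hx₁)) _ _ (one_le_sigmaS hcov hx₁) (sigmaS_mono hL₁)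
    (one_le_sigmaS hcov hx₂) (sigmaS_mono hL₂) (sigmaS_add_one_le_of_mem_of_mem hcov hW hx₁ hx₂)

end ZoneCount

theorem subadditive_prices_imply_no_stopover_single_general {V : Type*} (G : SimpleGraph V)
    (Z : Finset (Finset V)) (hZ : IsZonePartition Z)
    (P : ℕ → ℝ)
    (hsub : ∀ k : ℕ, 1 ≤ k → ∀ i₁ i₂ : ℕ, 1 ≤ i₁ → i₁ ≤ k → 1 ≤ i₂ → i₂ ≤ k →
      k + 1 ≤ i₁ + i₂ → P k ≤ P i₁ + P i₂) :
    ∀ W : List V, W.Chain' G.Adj → ∀ i : ℕ, 2 ≤ i → i ≤ W.length - 1 →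
      P (sigmaS Z W) ≤ P (sigmaS Z (W.take i)) + P (sigmaS Z (W.drop (i - 1))) := by
  intro W _ i hi2 hile
  have hi : i - 1 < W.length := by omega
  refine price_sigmaS_le_add_of_overlap hsub hZ.2.2
    (W.subset_take_append_drop (Nat.sub_le i 1)) (List.take_subset i W)
    (List.drop_subset (i - 1) W) (x := W[i - 1]) ?_ ?_
  · exact List.mem_take_iff_getElem.2 ⟨i - 1, by omega, rfl⟩
  · rw [List.drop_eq_getElem_cons hi]
    exact List.mem_cons_self

/-- If the price function satisfies P(k) ≤ P(i₁) + P(i₂) for all k ≥ 1 and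
i₁, i₂ ∈ {1, …, k} with i₁ + i₂ ≥ k + 1, then the zone tariff with single counting
satisfies the no-stopover property: splitting a path (v_1, …, v_n), n ≥ 3, at an
intermediate station v_i (2 ≤ i ≤ n - 1, one-based) never decreases the total fare. -/
theorem subadditive_prices_imply_no_stopover_single {V : Type*} (G : SimpleGraph V)
    (Z : Finset (Finset V)) (hZ : IsZonePartition Z)
    (P : ℕ → ℝ) (hP0 : ∀ k, 0 ≤ P k)
    (hsub : ∀ k : ℕ, 1 ≤ k → ∀ i₁ i₂ : ℕ, 1 ≤ i₁ → i₁ ≤ k → 1 ≤ i₂ → i₂ ≤ k →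
      k + 1 ≤ i₁ + i₂ → P k ≤ P i₁ + P i₂) :
    ∀ W : List V, W.Chain' G.Adj → ∀ i : ℕ, 2 ≤ i → i ≤ W.length - 1 →
      P (sigmaS Z W) ≤ P (sigmaS Z (W.take i)) + P (sigmaS Z (W.drop (i - 1))) :=
  subadditive_prices_imply_no_stopover_single_general G Z hZ P hsub

end
end

section
/- There exists an instance of the zone tariff design problem whose PTN is a tree and whose bound is N = 2 with z*_MA < z*_MC: on the path graph with vertices v_1, v_2, v_3 and edges {v_1,v_2}, {v_2,v_3}, with OD pairs (v_1,v_2), (v_2,v_3), (v_1,v_3), each with one passenger, reference prices r_{(v_1,v_2)} = 1, r_{(v_2,v_3)} = 1, r_{(v_1,v_3)} = 2, and paths equal to the unique simple paths, the minimum objective over zone partitions with at most 2 arbitrary zones (multiple counting) equals 0, while the minimum over zone partitions with at most 2 connected zones (multiple counting) equals 1. -/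
open scoped Classical
noncomputable section

/-- The path graph on three vertices v_0 - v_1 - v_2. -/
def pathGraph3 : SimpleGraph (Fin 3) :=
  SimpleGraph.fromRel (fun i j => (i : ℕ) + 1 = (j : ℕ))

/-!
With the disconnected zones `{v₀, v₂}, {v₁}` each trip crosses a border at every step, so the
zone counts are 2, 2, 3 and the prices 1 for two zones and 2 for three zones are exact.
A connected zone of the path that contains `v₀` and `v₂` also contains `v₁`, so with at most
two connected zones one of the short trips stays inside a single zone. The long trip then has
the same zone count as the other short trip, hence pays the same price, although their
reference prices differ by 1.
-/

section ZoneTariff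

variable {V ι : Type*}

lemma sigmaM_singleton (Z : Finset (Finset V)) (u : V) : sigmaM Z [u] = 1 := by
  simp [sigmaM]

lemma sigmaM_cons_cons (Z : Finset (Finset V)) (u v : V) (W : List V) :
    sigmaM Z (u :: v :: W) = sigmaM Z (v :: W) + if SameZone Z u v then 0 else 1 := by
  unfold sigmaM
  split_ifs with h <;> simp [h]
  omega

lemma sigmaM_cons_cons_of_sameZone {Z : Finset (Finset V)} {u v : V} (h : SameZone Z u v)
    (W : List V) : sigmaM Z (u :: v :: W) = sigmaM Z (v :: W) := by
  simp [sigmaM_cons_cons, h]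

lemma sigmaM_triple_of_sameZone {Z : Finset (Finset V)} {v w : V} (h : SameZone Z v w)
    (u : V) : sigmaM Z [u, v, w] = sigmaM Z [u, v] := by
  simp [sigmaM_cons_cons, sigmaM_singleton, h]

lemma IsZonePartition.compl_pair [Fintype V] [DecidableEq V] {A : Finset V} (hA : A.Nonempty)
    (hAc : Aᶜ.Nonempty) : IsZonePartition {A, Aᶜ} := by
  refine ⟨?_, ?_, fun v => ?_⟩
  · simp [hA, hAc]
  · simp only [Finset.mem_insert, Finset.mem_singleton]
    rintro B (rfl | rfl) C (rfl | rfl) hBC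
    exacts [absurd rfl hBC, disjoint_compl_right, disjoint_compl_left, absurd rfl hBC]
  · by_cases hv : v ∈ A
    · exact ⟨A, by simp, hv⟩
    · exact ⟨Aᶜ, by simp, by simpa using hv⟩

lemma IsZonePartition.sameZone_of_not_sameZone {Z : Finset (Finset V)} (hZ : IsZonePartition Z)
    (hcard : Z.card ≤ 2) {u v w : V} (huv : ¬ SameZone Z u v) (hvw : ¬ SameZone Z v w) :
    SameZone Z u w := by
  obtain ⟨A, hA, huA⟩ := hZ.2.2 u
  obtain ⟨B, hB, hvB⟩ := hZ.2.2 v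
  obtain ⟨C, hC, hwC⟩ := hZ.2.2 w
  have hAB : A ≠ B := by rintro rfl; exact huv ⟨A, hA, huA, hvB⟩
  have hBC : B ≠ C := by rintro rfl; exact hvw ⟨B, hB, hvB, hwC⟩
  by_contra huw
  have hAC : A ≠ C := by rintro rfl; exact huw ⟨A, hA, huA, hwC⟩
  have : 2 < Z.card := Finset.two_lt_card.2 ⟨A, hA, B, hB, C, hC, hAB, hAC, hBC⟩
  omega

lemma ZoneConnected.exists_adj {G : SimpleGraph V} {A : Finset V} (hA : ZoneConnected G A)
    {u w : V} (hu : u ∈ A) (hw : w ∈ A) (huw : u ≠ w) : ∃ x ∈ A, G.Adj u x := by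
  obtain ⟨p⟩ := hA.preconnected ⟨u, hu⟩ ⟨w, hw⟩
  have hp : ¬ p.Nil := SimpleGraph.Walk.not_nil_of_ne (by simpa using huw)
  exact ⟨p.snd, p.snd.2, SimpleGraph.Walk.adj_snd hp⟩

lemma zoneObj_nonneg (D : Finset ι) (r : ι → ℝ) (t : ι → ℕ) (Wd : ι → List V)
    (σ : Finset (Finset V) → List V → ℕ) (Z : Finset (Finset V)) (P : ℕ → ℝ) :
    0 ≤ zoneObj D r t Wd σ Z P :=
  Finset.sum_nonneg fun _ _ => by positivity

lemma abs_sub_le_zoneObj {D : Finset ι} {r : ι → ℝ} {t : ι → ℕ} {Wd : ι → List V}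
    {σ : Finset (Finset V) → List V → ℕ} {Z : Finset (Finset V)} (P : ℕ → ℝ) {d d' : ι}
    (hd : d ∈ D) (hd' : d' ∈ D) (hne : d ≠ d') (ht : 1 ≤ t d) (ht' : 1 ≤ t d')
    (hσ : σ Z (Wd d) = σ Z (Wd d')) : |r d - r d'| ≤ zoneObj D r t Wd σ Z P := by
  set p := P (σ Z (Wd d'))
  have hpair : ∑ x ∈ {d, d'}, (t x : ℝ) * |r x - P (σ Z (Wd x))| ≤ zoneObj D r t Wd σ Z P :=
    Finset.sum_le_sum_of_subset_of_nonneg (by simp [Finset.insert_subset_iff, hd, hd'])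
      fun _ _ _ => by positivity
  rw [Finset.sum_pair hne, hσ] at hpair
  have ht : (1 : ℝ) ≤ t d := by exact_mod_cast ht
  have ht' : (1 : ℝ) ≤ t d' := by exact_mod_cast ht'
  calc |r d - r d'| ≤ |r d - p| + |r d' - p| := abs_sub_comm (r d') p ▸ abs_sub_le _ _ _
    _ ≤ (t d : ℝ) * |r d - p| + t d' * |r d' - p| :=
        add_le_add (le_mul_of_one_le_left (abs_nonneg _) ht)
          (le_mul_of_one_le_left (abs_nonneg _) ht')
    _ ≤ _ := hpair

lemma zStar_eq_of_isLeast {D : Finset ι} {r : ι → ℝ} {t : ι → ℕ} {Wd : ι → List V}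
    {σ : Finset (Finset V) → List V → ℕ} {feas : Finset (Finset V) → Prop} {m : ℝ}
    {Z₀ : Finset (Finset V)} {P₀ : ℕ → ℝ} (hZ₀ : feas Z₀) (hP₀ : ∀ k, 0 ≤ P₀ k)
    (hm : zoneObj D r t Wd σ Z₀ P₀ = m)
    (hlow : ∀ Z P, feas Z → (∀ k, 0 ≤ P k) → m ≤ zoneObj D r t Wd σ Z P) :
    zStar D r t Wd σ feas = m :=
  IsLeast.csInf_eq ⟨⟨Z₀, P₀, hZ₀, hP₀, hm.symm⟩, by
    rintro _ ⟨Z, P, hZ, hP, rfl⟩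
    exact hlow Z P hZ hP⟩

end ZoneTariff

lemma pathGraph3_adj_zero_one : pathGraph3.Adj 0 1 := by
  simp [pathGraph3]

lemma pathGraph3_eq_one_of_adj_zero {x : Fin 3} (h : pathGraph3.Adj 0 x) : x = 1 := by
  fin_cases x <;> simp_all [pathGraph3]

lemma sameZone_or_of_zoneConnected_pathGraph3 {Z : Finset (Finset (Fin 3))}
    (hZ : IsZonePartition Z) (hcard : Z.card ≤ 2) (hconn : ∀ A ∈ Z, ZoneConnected pathGraph3 A) :
    SameZone Z 0 1 ∨ SameZone Z 1 2 := by
  by_contra! ⟨h01, h12⟩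
  obtain ⟨A, hA, h0, h2⟩ := hZ.sameZone_of_not_sameZone hcard h01 h12
  obtain ⟨x, hx, hadj⟩ := (hconn A hA).exists_adj h0 h2 (by decide)
  exact h01 ⟨A, hA, h0, pathGraph3_eq_one_of_adj_zero hadj ▸ hx⟩

def pathGraph3Obj (Z : Finset (Finset (Fin 3))) (P : ℕ → ℝ) : ℝ :=
  zoneObj Finset.univ ![1, 1, 2] (fun _ => 1) ![[0, 1], [1, 2], [0, 1, 2]] sigmaM Z P

lemma pathGraph3Obj_eq (Z : Finset (Finset (Fin 3))) (P : ℕ → ℝ) :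
    pathGraph3Obj Z P = |1 - P (sigmaM Z [0, 1])| + |1 - P (sigmaM Z [1, 2])| +
      |2 - P (sigmaM Z [0, 1, 2])| := by
  simp [pathGraph3Obj, zoneObj, Fin.sum_univ_three]

lemma one_le_pathGraph3Obj_of_zoneConnected {Z : Finset (Finset (Fin 3))}
    (hZ : IsZonePartition Z) (hcard : Z.card ≤ 2) (hconn : ∀ A ∈ Z, ZoneConnected pathGraph3 A)
    (P : ℕ → ℝ) : 1 ≤ pathGraph3Obj Z P := by
  rcases sameZone_or_of_zoneConnected_pathGraph3 hZ hcard hconn with h01 | h12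
  · refine le_trans ?_ (abs_sub_le_zoneObj (d := 1) (d' := 2) P (Finset.mem_univ _)
      (Finset.mem_univ _) (by decide) le_rfl le_rfl (sigmaM_cons_cons_of_sameZone h01 [2]).symm)
    norm_num [Matrix.cons_val_two, Matrix.cons_val_one]
  · refine le_trans ?_ (abs_sub_le_zoneObj (d := 0) (d' := 2) P (Finset.mem_univ _)
      (Finset.mem_univ _) (by decide) le_rfl le_rfl (sigmaM_triple_of_sameZone h12 0).symm)
    norm_num [Matrix.cons_val_two]

lemma pathGraph3Obj_disconnected_eq_zero :
    pathGraph3Obj {{0, 2}, {0, 2}ᶜ} (fun k => if k ≤ 2 then 1 else 2) = 0 := by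
  simp [pathGraph3Obj_eq, sigmaM_cons_cons, sigmaM_singleton, SameZone]

lemma pathGraph3Obj_connected_eq_one : pathGraph3Obj {{0, 1}, {0, 1}ᶜ} (fun _ => 1) = 1 := by
  norm_num [pathGraph3Obj_eq]

lemma zoneConnected_pathGraph3_of_mem {A : Finset (Fin 3)}
    (hA : A ∈ ({{0, 1}, {0, 1}ᶜ} : Finset (Finset (Fin 3)))) :
    ZoneConnected pathGraph3 A := by
  have hc : ({0, 1}ᶜ : Finset (Fin 3)) = {2} := by decide
  rw [hc, Finset.mem_insert, Finset.mem_singleton] at hA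
  rcases hA with rfl | rfl
  · rw [ZoneConnected, Finset.coe_pair]
    exact SimpleGraph.induce_pair_connected_of_adj pathGraph3_adj_zero_one
  · rw [ZoneConnected, Finset.coe_singleton, SimpleGraph.induce_singleton_eq_top]
    exact SimpleGraph.connected_top

/-- On the path graph with three vertices, OD pairs (v_0,v_1), (v_1,v_2), (v_0,v_2) with
one passenger each, reference prices 1, 1, 2 and the unique simple paths, and bound N = 2,
the optimal value with arbitrary zones and multiple counting is 0, while the optimal value
with connected zones and multiple counting is 1; hence z*_MA < z*_MC. -/
theorem example_MA_lt_MC :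
    zStar (Finset.univ : Finset (Fin 3)) (![1, 1, 2] : Fin 3 → ℝ) (fun _ => 1)
        ![([0, 1] : List (Fin 3)), [1, 2], [0, 1, 2]] sigmaM
        (fun Z => IsZonePartition Z ∧ Z.card ≤ 2) = 0 ∧
      zStar (Finset.univ : Finset (Fin 3)) (![1, 1, 2] : Fin 3 → ℝ) (fun _ => 1)
        ![([0, 1] : List (Fin 3)), [1, 2], [0, 1, 2]] sigmaM
        (fun Z => IsZonePartition Z ∧ Z.card ≤ 2 ∧ ∀ A ∈ Z, ZoneConnected pathGraph3 A)
          = 1 := by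
  constructor
  · refine zStar_eq_of_isLeast
      ⟨IsZonePartition.compl_pair ⟨0, by simp⟩ ⟨1, by simp⟩, Finset.card_le_two⟩
      (fun k => by split_ifs <;> norm_num) pathGraph3Obj_disconnected_eq_zero
      fun Z P _ _ => zoneObj_nonneg _ _ _ _ _ Z P
  · refine zStar_eq_of_isLeast
      ⟨IsZonePartition.compl_pair ⟨0, by simp⟩ ⟨2, by simp⟩, Finset.card_le_two,
        fun _ => zoneConnected_pathGraph3_of_mem⟩
      (fun _ => zero_le_one) pathGraph3Obj_connected_eq_one
      fun Z P ⟨hZ, hcard, hconn⟩ _ => one_le_pathGraph3Obj_of_zoneConnected hZ hcard hconn P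
end
end
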